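/- arXiv:2007.03572 — 6 statements merged into one kernel-verified Lean document; each statement's English description precedes it below -/
import Mathlib

section
/- Let X be a real-valued random variable with mean μ and finite variance σ², and let X₁,…,Xₙ be n independent copies of X, where n = K·m for positive integers K, m with K ≤ n/2. Partition the samples into K consecutive blocks of size m and let μ̃ be a median of the K block averages (i.e., at least K/2 of the block averages are ≤ μ̃ and at least K/2 are ≥ μ̃). Then with probability at least 1 − e^{−K/4.5}, μ̃ − μ ≤ σ√(8K/n). -/
open MeasureTheory ProbabilityTheory Real
open scoped RealInnerProductSpace

/-- The average of the `k`-th consecutive block of size `m` of the real samples `Y`. -/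
noncomputable def blockAvg {Ω : Type*} (m : ℕ) (Y : ℕ → Ω → ℝ) (k : ℕ) (ω : Ω) : ℝ :=
  (∑ j ∈ Finset.range m, Y (k * m + j) ω) / m

/-- `med` is a median-of-means estimator with parameter `K` (block size `m`) for the
samples `Y`: pointwise, at least `K/2` of the `K` block averages are `≤ med` and at
least `K/2` of them are `≥ med`. -/
def IsMedianOfMeans {Ω : Type*} (K m : ℕ) (Y : ℕ → Ω → ℝ) (med : Ω → ℝ) : Prop :=
  ∀ ω : Ω,
    (K : ℝ) / 2 ≤ (((Finset.range K).filter fun k => blockAvg m Y k ω ≤ med ω).card : ℝ) ∧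
    (K : ℝ) / 2 ≤ (((Finset.range K).filter fun k => med ω ≤ blockAvg m Y k ω).card : ℝ)

section MomAux

open MeasureTheory ProbabilityTheory Real Finset
open scoped ENNReal

lemma mom_arith (K h : ℕ) (hK : 0 < K) (h2 : K ≤ 2 * h) (hhK : h ≤ K) :
    (K.choose h : ℝ) * (1/8)^h ≤ Real.exp (-(K : ℝ) / 4.5) := by
  have hc : (K.choose h : ℝ) ≤ 2 ^ K := by
    have : K.choose h ≤ 2 ^ K := by
      calc K.choose h ≤ ∑ i ∈ range (K+1), K.choose i :=
            Finset.single_le_sum (f := fun i => K.choose i) (fun i _ => Nat.zero_le _)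
              (Finset.mem_range.2 (Nat.lt_succ_of_le hhK))
        _ = 2 ^ K := Nat.sum_range_choose K
    exact_mod_cast this
  have hp : ((1:ℝ)/8)^h ≤ ((1:ℝ)/8) ^ ((K:ℝ)/2) := by
    rw [← Real.rpow_natCast (1/8 : ℝ) h]
    apply Real.rpow_le_rpow_of_exponent_ge (by norm_num) (by norm_num)
    have : (K : ℝ) ≤ 2 * h := by exact_mod_cast h2
    linarith
  have key : (2:ℝ) ^ K * ((1:ℝ)/8) ^ ((K:ℝ)/2) ≤ Real.exp (-(K : ℝ) / 4.5) := by
    have h8 : ((1:ℝ)/8) ^ ((K:ℝ)/2) = Real.exp (-(3 * Real.log 2) * ((K:ℝ)/2)) := by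
      rw [Real.rpow_def_of_pos (by norm_num)]
      congr 1
      have : Real.log (1/8 : ℝ) = -(3 * Real.log 2) := by
        rw [one_div, Real.log_inv]
        norm_num
        rw [show (8:ℝ) = 2 ^ (3:ℕ) by norm_num, Real.log_pow]
        push_cast; ring
      rw [this]
  
    have h2K : (2:ℝ) ^ K = Real.exp (Real.log 2 * K) := by
      rw [← Real.exp_log (show (0:ℝ) < 2 ^ K by positivity), Real.log_pow]
      push_cast; ring_nf
    rw [h8, h2K, ← Real.exp_add]
    apply Real.exp_le_exp.2
    rw [show (4.5:ℝ) = 9/2 by norm_num]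
    have hl : (0.6931471803 : ℝ) < Real.log 2 := Real.log_two_gt_d9
    have hK1 : (1:ℝ) ≤ K := by exact_mod_cast hK
    have hK0 : (0:ℝ) ≤ K := by positivity
    have := mul_le_mul_of_nonneg_right (le_of_lt hl) hK0
    linarith
  calc (K.choose h : ℝ) * (1/8)^h ≤ 2^K * ((1:ℝ)/8) ^ ((K:ℝ)/2) := by
        apply mul_le_mul hc hp (by positivity) (by positivity)
    _ ≤ _ := key

lemma mom_indep_prod {Ω : Type*} [MeasureSpace Ω] [IsProbabilityMeasure (ℙ : Measure Ω)]
    (K m n : ℕ) (hn : n = K * m) (hm : 0 < m)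
    (X : ℕ → Ω → ℝ) (hmeas : ∀ i, Measurable (X i))
    (hindep : iIndepFun (fun i : Fin n => X i) ℙ)
    (c : ℝ)
    (S : Finset ℕ) (hS : S ⊆ Finset.range K) :
    ℙ (⋂ k ∈ S, {ω | c < blockAvg m X k ω}) = ∏ k ∈ S, ℙ {ω | c < blockAvg m X k ω} := by
  classical
  set blk : ℕ → Finset (Fin n) :=
    fun k => Finset.univ.filter (fun i : Fin n => k * m ≤ i.1 ∧ i.1 < k * m + m) with hblk
  have hsum : ∀ k, k < K → ∀ ω, ∑ i ∈ blk k, X i.1 ω = ∑ j ∈ Finset.range m, X (k*m+j) ω := by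
    intro k hk ω
    refine Finset.sum_bij' (fun (i : Fin n) _ => i.1 - k*m)
      (fun j hj => (⟨k*m+j, ?_⟩ : Fin n)) ?_ ?_ ?_ ?_ ?_
    · have hj' : j < m := Finset.mem_range.1 hj
      calc k*m+j < k*m+m := by omega
        _ = (k+1)*m := by ring
        _ ≤ K*m := Nat.mul_le_mul_right _ hk
        _ = n := hn.symm
    · intro i hi
      simp only [hblk, Finset.mem_filter] at hi
      beta_reduce
      exact Finset.mem_range.2 (by omega)
    · intro j hj
      have hj' : j < m := Finset.mem_range.1 hj
      simp only [hblk, Finset.mem_filter]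
      exact ⟨Finset.mem_univ _, by omega, by omega⟩
    · intro i hi
      simp only [hblk, Finset.mem_filter] at hi
      apply Fin.ext
      show k*m + (i.1 - k*m) = i.1
      omega
    · intro j hj; simp
    · intro i hi
      simp only [hblk, Finset.mem_filter] at hi
      beta_reduce
      congr 2
      omega
  have hdisj : ∀ a b : ℕ, a ≠ b → Disjoint (blk a) (blk b) := by
    intro a b hab
    rw [Finset.disjoint_left]
    intro i hi hi'
    simp only [hblk, Finset.mem_filter] at hi hi'
    rcases lt_or_gt_of_ne hab with h | h
    · have : (a+1)*m ≤ b*m := Nat.mul_le_mul_right _ h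
      have : a*m + m ≤ b*m := by nlinarith
      omega
    · have : (b+1)*m ≤ a*m := Nat.mul_le_mul_right _ h
      have : b*m + m ≤ a*m := by nlinarith
      omega
  induction S using Finset.induction_on with
  | empty => simp [measure_univ]
  | @insert a S' ha IH =>
    have haK : a < K := Finset.mem_range.1 (hS (Finset.mem_insert_self a S'))
    have hS' : S' ⊆ Finset.range K := fun x hx => hS (Finset.mem_insert_of_mem hx)
    rw [Finset.set_biInter_insert, Finset.prod_insert ha, ← IH hS']
    set T : Finset (Fin n) := S'.biUnion blk with hT
    have hdT : Disjoint (blk a) T :=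
      (Finset.disjoint_biUnion_right _ _ _).2 fun b hb => hdisj a b (by rintro rfl; exact ha hb)
    have hIndepF := hindep.indepFun_finset (blk a) T hdT (fun i => hmeas i)
    set Ea : Set (↥(blk a) → ℝ) := {v | c < (∑ i, v i) / m} with hEa_def
    set ET : Set (↥T → ℝ) :=
      ⋂ k ∈ S', {v | c < (∑ i : ↥T, if (i : Fin n) ∈ blk k then v i else 0) / m} with hET_def
    have hEa : MeasurableSet Ea :=
      measurableSet_lt measurable_const
        ((Finset.measurable_sum Finset.univ (fun i _ => measurable_pi_apply i)).div_const _)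
    have hET : MeasurableSet ET := by
      refine MeasurableSet.biInter (S' : Set ℕ).to_countable fun k hk => ?_
      refine measurableSet_lt measurable_const
        ((Finset.measurable_sum Finset.univ (fun i _ => ?_)).div_const _)
      by_cases hcond : (i : Fin n) ∈ blk k
      · simpa [hcond] using measurable_pi_apply i
      · simpa [hcond] using measurable_const
    have hpreA : (fun ω (i : ↥(blk a)) => X (i : Fin n).1 ω) ⁻¹' Ea
        = {ω | c < blockAvg m X a ω} := by
      ext ω
      simp only [Set.mem_preimage, hEa_def, Set.mem_setOf_eq, blockAvg]
      rw [Finset.sum_coe_sort (blk a) (fun x : Fin n => X x.1 ω), hsum a haK ω]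
    have hpreT : (fun ω (i : ↥T) => X (i : Fin n).1 ω) ⁻¹' ET
        = ⋂ k ∈ S', {ω | c < blockAvg m X k ω} := by
      ext ω
      simp only [Set.mem_preimage, hET_def, Set.mem_iInter, Set.mem_setOf_eq, blockAvg]
      refine forall₂_congr fun k hk => ?_
      have hkK : k < K := Finset.mem_range.1 (hS' hk)
      have hsub : blk k ⊆ T := Finset.subset_biUnion_of_mem blk hk
      have : (∑ i : ↥T, if (i : Fin n) ∈ blk k then X (i : Fin n).1 ω else 0)
          = ∑ j ∈ Finset.range m, X (k*m+j) ω := by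
        rw [Finset.sum_coe_sort T (fun x : Fin n => if x ∈ blk k then X x.1 ω else 0),
          ← Finset.sum_filter]
        rw [show T.filter (· ∈ blk k) = blk k by
          ext i; simp only [Finset.mem_filter]
          exact ⟨fun h => h.2, fun h => ⟨hsub h, h⟩⟩]
        exact hsum k hkK ω
      rw [this]
    have := hIndepF.measure_inter_preimage_eq_mul _ _ hEa hET
    rw [hpreA, hpreT] at this
    exact this

lemma mom_block_bound {Ω : Type*} [MeasureSpace Ω] [IsProbabilityMeasure (ℙ : Measure Ω)]
    (K m n : ℕ) (hK : 0 < K) (hm : 0 < m) (hn : n = K * m)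
    (X : ℕ → Ω → ℝ) (μ σ : ℝ) (hσ : 0 ≤ σ)
    (hmeas : ∀ i, Measurable (X i))
    (hindep : iIndepFun (fun i : Fin n => X i) ℙ)
    (hident : ∀ i : Fin n, IdentDistrib (X i) (X 0) ℙ ℙ)
    (hL2 : MemLp (X 0) 2 ℙ)
    (hmean : ∫ ω, X 0 ω ∂ℙ = μ)
    (hvar : ∫ ω, (X 0 ω - μ) ^ 2 ∂ℙ = σ ^ 2)
    (k : ℕ) (hk : k < K) :
    ℙ {ω | μ + σ * Real.sqrt (8 * K / n) < blockAvg m X k ω} ≤ ENNReal.ofReal (1/8) := by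
  have hnpos : 0 < n := hn ▸ Nat.mul_pos hK hm
  have hidx : ∀ j, j < m → k * m + j < n := by
    intro j hj
    calc k*m+j < k*m+m := by omega
      _ = (k+1)*m := by ring
      _ ≤ K*m := Nat.mul_le_mul_right _ hk
      _ = n := hn.symm
  set Y : ℕ → Ω → ℝ := fun j => X (k*m+j) with hY
  set W : Ω → ℝ := ∑ j ∈ Finset.range m, Y j with hW
  -- basic facts about each X i
  have hvar0 : variance (X 0) ℙ = σ ^ 2 := by
    rw [variance_eq_integral hL2.aestronglyMeasurable.aemeasurable]
    rw [hmean]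
    rw [← hvar]
  have hmemY : ∀ j ∈ Finset.range m, MemLp (Y j) 2 ℙ := by
    intro j hj
    exact (hident ⟨k*m+j, hidx j (Finset.mem_range.1 hj)⟩).symm.memLp_snd hL2
  have hWmem : MemLp W 2 ℙ := memLp_finset_sum' _ hmemY
  have hEW : ∫ ω, W ω ∂ℙ = m * μ := by
    have : ∫ ω, W ω ∂ℙ = ∑ j ∈ Finset.range m, ∫ ω, Y j ω ∂ℙ := by
      simp only [hW, Finset.sum_apply]
      exact integral_finset_sum _ fun j hj => (hmemY j hj).integrable one_le_two
    rw [this]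
    have : ∀ j ∈ Finset.range m, ∫ ω, Y j ω ∂ℙ = μ := by
      intro j hj
      rw [hY]
      exact ((hident ⟨k*m+j, hidx j (Finset.mem_range.1 hj)⟩).integral_eq).trans hmean
    rw [Finset.sum_congr rfl this, Finset.sum_const, Finset.card_range, nsmul_eq_mul]
  have hVarW : variance W ℙ = m * σ ^ 2 := by
    rw [hW, IndepFun.variance_sum hmemY ?_]
    · have : ∀ j ∈ Finset.range m, variance (Y j) ℙ = σ ^ 2 := fun j hj =>
        ((hident ⟨k*m+j, hidx j (Finset.mem_range.1 hj)⟩).variance_eq).trans hvar0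
      rw [Finset.sum_congr rfl this, Finset.sum_const, Finset.card_range, nsmul_eq_mul]
    · intro i hi j hj hij
      have hi' : i < m := Finset.mem_range.1 (by exact_mod_cast hi)
      have hj' : j < m := Finset.mem_range.1 (by exact_mod_cast hj)
      exact hindep.indepFun (i := ⟨k*m+i, hidx i hi'⟩) (j := ⟨k*m+j, hidx j hj'⟩)
        (by intro h; apply hij; simpa using congrArg Fin.val h)
  have hblockW : ∀ ω, blockAvg m X k ω = W ω / m := by
    intro ω
    simp [blockAvg, hW, Finset.sum_apply, hY]
  rcases eq_or_lt_of_le hσ with hσ0 | hσpos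
  · -- σ = 0 : variance is zero, block average is a.s. equal to μ
    have hsub : {ω | μ + σ * Real.sqrt (8 * K / n) < blockAvg m X k ω} ⊆
        ⋃ j : ℕ, {ω | 1/((j:ℝ)+1) ≤ |W ω - ∫ ω, W ω ∂ℙ|} := by
      intro ω hω
      simp only [Set.mem_setOf_eq, ← hσ0, zero_mul, add_zero, hblockW] at hω
      have hpos : 0 < W ω - ∫ ω, W ω ∂ℙ := by
        rw [hEW]
        have := (lt_div_iff₀ (by exact_mod_cast hm : (0:ℝ) < m)).1 hω
        nlinarith [this]
      obtain ⟨j, hj⟩ := exists_nat_one_div_lt hpos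
      exact Set.mem_iUnion.2 ⟨j, le_trans hj.le (le_abs_self _)⟩
    have hzero : ℙ (⋃ j : ℕ, {ω | 1/((j:ℝ)+1) ≤ |W ω - ∫ ω, W ω ∂ℙ|}) = 0 := by
      refine measure_iUnion_null fun j => ?_
      have := meas_ge_le_variance_div_sq (μ := ℙ) hWmem
        (c := 1/((j:ℝ)+1)) (by positivity)
      rw [hVarW, ← hσ0] at this
      simpa using this
    calc ℙ _ ≤ 0 := hzero ▸ measure_mono hsub
      _ ≤ _ := zero_le
  · -- σ > 0 : Chebyshev
    set t : ℝ := σ * Real.sqrt (8 * K / n) with ht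
    have htpos : 0 < t := by
      apply mul_pos hσpos
      apply Real.sqrt_pos.2
      positivity
    have hsub : {ω | μ + t < blockAvg m X k ω} ⊆
        {ω | (m:ℝ) * t ≤ |W ω - ∫ ω, W ω ∂ℙ|} := by
      intro ω hω
      simp only [Set.mem_setOf_eq, hblockW] at hω ⊢
      rw [hEW]
      have hmpos : (0:ℝ) < m := by exact_mod_cast hm
      have := (lt_div_iff₀ hmpos).1 hω
      have h2 : (m:ℝ) * t ≤ W ω - m * μ := by nlinarith
      exact h2.trans (le_abs_self _)
    have hcheb := meas_ge_le_variance_div_sq (μ := ℙ) hWmem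
      (c := (m:ℝ) * t) (by positivity)
    have hval : variance W ℙ / ((m:ℝ)*t)^2 = 1/8 := by
      rw [hVarW]
      have ht2 : t^2 = σ^2 * (8*K/n) := by
        rw [ht, mul_pow, Real.sq_sqrt (by positivity)]
      have hcast : (n:ℝ) = (K:ℝ)*(m:ℝ) := by exact_mod_cast hn
      rw [mul_pow, ht2, hcast]
      have hm' : (m:ℝ) ≠ 0 := by positivity
      have hK' : (K:ℝ) ≠ 0 := by positivity
      have hσ' : σ ≠ 0 := ne_of_gt hσpos
      field_simp
    calc ℙ {ω | μ + t < blockAvg m X k ω}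
        ≤ ℙ {ω | (m:ℝ) * t ≤ |W ω - ∫ ω, W ω ∂ℙ|} := measure_mono hsub
      _ ≤ ENNReal.ofReal (variance W ℙ / ((m:ℝ)*t)^2) := hcheb
      _ = ENNReal.ofReal (1/8) := by rw [hval]

end MomAux

open scoped ENNReal in
/-- **Median-of-means concentration (one-sided).**
If `X 0, …, X (n-1)` are `n = K * m` independent copies of a random variable with mean `μ`
and variance `σ²`, `K ≤ n / 2`, and `med` is a median of the `K` block averages, then
with probability at least `1 - exp (-K / 4.5)` we have `med - μ ≤ σ * √(8 K / n)`. -/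

theorem mom_concentration_one_sided
    {Ω : Type*} [MeasureSpace Ω] [IsProbabilityMeasure (ℙ : Measure Ω)]
    (K m n : ℕ) (hK : 0 < K) (hm : 0 < m) (hn : n = K * m) (hKn : 2 * K ≤ n)
    (X : ℕ → Ω → ℝ) (μ σ : ℝ) (hσ : 0 ≤ σ)
    (hmeas : ∀ i, Measurable (X i))
    (hindep : iIndepFun (fun i : Fin n => X i) ℙ)
    (hident : ∀ i : Fin n, IdentDistrib (X i) (X 0) ℙ ℙ)
    (hL2 : MemLp (X 0) 2 ℙ)
    (hmean : ∫ ω, X 0 ω ∂ℙ = μ)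
    (hvar : ∫ ω, (X 0 ω - μ) ^ 2 ∂ℙ = σ ^ 2)
    (med : Ω → ℝ) (hmed : IsMedianOfMeans K m X med) :
    1 - Real.exp (-(K : ℝ) / 4.5) ≤
      (ℙ {ω | med ω - μ ≤ σ * Real.sqrt (8 * K / n)}).toReal := by
  classical
  set t : ℝ := σ * Real.sqrt (8 * K / n) with ht
  set A : ℕ → Set Ω := fun k => {ω | μ + t < blockAvg m X k ω} with hA
  set h : ℕ := (K+1)/2 with hh
  set 𝒮 : Finset (Finset ℕ) := Finset.powersetCard h (Finset.range K) with h𝒮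
  set U : Set Ω := ⋃ S ∈ 𝒮, ⋂ k ∈ S, A k with hU
  have hAmeas : ∀ k, MeasurableSet (A k) := by
    intro k
    have hbm : Measurable (blockAvg m X k) := by
      unfold blockAvg
      exact (Finset.measurable_sum _ fun j _ => hmeas _).div_const _
    exact measurableSet_lt measurable_const hbm
  have hUmeas : MeasurableSet U := by
    refine Finset.measurableSet_biUnion _ fun S _ => ?_
    exact Finset.measurableSet_biInter _ fun k _ => hAmeas k
  have hsubU : ∀ ω, ω ∉ U → med ω - μ ≤ t := by
    intro ω hω
    by_contra hcon
    push_neg at hcon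
    have hmed2 := (hmed ω).2
    set T : Finset ℕ := (Finset.range K).filter (fun k => μ + t < blockAvg m X k ω) with hT
    have hfsub : (Finset.range K).filter (fun k => med ω ≤ blockAvg m X k ω) ⊆ T := by
      apply Finset.monotone_filter_right
      intro k _ hk
      have : μ + t < med ω := by linarith
      linarith
    have hTcard : h ≤ T.card := by
      have h1 : (K:ℝ)/2 ≤ (T.card : ℝ) := le_trans hmed2 (by exact_mod_cast Finset.card_le_card hfsub)
      have h2 : (K:ℝ) ≤ 2 * T.card := by linarith
      have h3 : K ≤ 2 * T.card := by exact_mod_cast h2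
      omega
    obtain ⟨S, hSsub, hScard⟩ := Finset.exists_subset_card_eq hTcard
    apply hω
    refine Set.mem_biUnion (show S ∈ 𝒮 from ?_) ?_
    · exact Finset.mem_powersetCard.2 ⟨hSsub.trans (Finset.filter_subset _ _), hScard⟩
    · refine Set.mem_iInter₂.2 fun k hk => ?_
      have := hSsub hk
      rw [hT, Finset.mem_filter] at this
      exact this.2
  have hU_bound : ℙ U ≤ ENNReal.ofReal (Real.exp (-(K:ℝ)/4.5)) := by
    have step1 : ℙ U ≤ ∑ S ∈ 𝒮, ℙ (⋂ k ∈ S, A k) := measure_biUnion_finset_le _ _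
    have step2 : ∀ S ∈ 𝒮, ℙ (⋂ k ∈ S, A k) ≤ ENNReal.ofReal ((1/8 : ℝ)^h) := by
      intro S hS
      obtain ⟨hSsub, hScard⟩ := Finset.mem_powersetCard.1 hS
      calc ℙ (⋂ k ∈ S, A k) = ∏ k ∈ S, ℙ (A k) :=
            mom_indep_prod K m n hn hm X hmeas hindep (μ + t) S hSsub
        _ ≤ ∏ k ∈ S, ENNReal.ofReal (1/8) := by
            refine Finset.prod_le_prod' fun k hk => ?_
            exact mom_block_bound K m n hK hm hn X μ σ hσ hmeas hindep hident hL2 hmean hvar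
              k (Finset.mem_range.1 (hSsub hk))
        _ = ENNReal.ofReal (1/8) ^ S.card := Finset.prod_const _
        _ = ENNReal.ofReal ((1/8 : ℝ)^h) := by
            rw [hScard, ← ENNReal.ofReal_pow (by norm_num)]
    have step3 : ∑ S ∈ 𝒮, ℙ (⋂ k ∈ S, A k) ≤ 𝒮.card • ENNReal.ofReal ((1/8 : ℝ)^h) :=
      Finset.sum_le_card_nsmul _ _ _ step2
    have step4 : (𝒮.card • ENNReal.ofReal ((1/8 : ℝ)^h) : ℝ≥0∞)
        = ENNReal.ofReal ((K.choose h : ℝ) * (1/8 : ℝ)^h) := by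
      rw [h𝒮, Finset.card_powersetCard, Finset.card_range, nsmul_eq_mul,
        ENNReal.ofReal_mul (by positivity), ENNReal.ofReal_natCast]
    have step5 : (K.choose h : ℝ) * (1/8 : ℝ)^h ≤ Real.exp (-(K:ℝ)/4.5) :=
      mom_arith K h hK (by omega) (by omega)
    calc ℙ U ≤ ∑ S ∈ 𝒮, ℙ (⋂ k ∈ S, A k) := step1
      _ ≤ 𝒮.card • ENNReal.ofReal ((1/8 : ℝ)^h) := step3
      _ = ENNReal.ofReal ((K.choose h : ℝ) * (1/8 : ℝ)^h) := step4
      _ ≤ ENNReal.ofReal (Real.exp (-(K:ℝ)/4.5)) := ENNReal.ofReal_le_ofReal step5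
  have h1 : (ℙ U).toReal ≤ Real.exp (-(K:ℝ)/4.5) :=
    ENNReal.toReal_le_of_le_ofReal (Real.exp_nonneg _) hU_bound
  have h2 : (ℙ Uᶜ).toReal = 1 - (ℙ U).toReal := by
    rw [measure_compl hUmeas (measure_ne_top _ _), measure_univ,
      ENNReal.toReal_sub_of_le prob_le_one ENNReal.one_ne_top, ENNReal.toReal_one]
  have hUc : Uᶜ ⊆ {ω | med ω - μ ≤ t} := fun ω hω => hsubU ω hω
  calc 1 - Real.exp (-(K:ℝ)/4.5) ≤ (ℙ Uᶜ).toReal := by rw [h2]; linarith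
    _ ≤ (ℙ {ω | med ω - μ ≤ t}).toReal :=
      ENNReal.toReal_mono (measure_ne_top _ _) (measure_mono hUc)
end

section
/- Let X be a real-valued random variable with mean μ and finite variance σ², let δ ∈ (0,1), set K = ⌈4.5·log(1/δ)⌉, and let X₁,…,Xₙ be n independent copies of X with n = K·m and n ≥ 18·⌈log(1/δ)⌉. Let μ̃ be the median-of-means estimator with parameter K applied to X₁,…,Xₙ. Then with probability at least 1 − 2δ, |μ̃ − μ| ≤ 6σ√(⌈log(1/δ)⌉/n). -/
open MeasureTheory ProbabilityTheory Real
open scoped RealInnerProductSpace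

set_option maxHeartbeats 1000000 in
/-- One-sided Chernoff-type tail bound for the number of deviant blocks. -/
theorem mom_aux
    {Ω : Type*} [MeasureSpace Ω] [IsProbabilityMeasure (ℙ : Measure Ω)]
    (δ : ℝ) (hδ0 : 0 < δ) (hδ1 : δ < 1)
    (K m n : ℕ) (hm : 0 < m)
    (hK : K = ⌈(4.5 : ℝ) * Real.log (1 / δ)⌉₊)
    (hn : n = K * m)
    (X : ℕ → Ω → ℝ) (μ σ : ℝ) (hσ : 0 < σ)
    (hmeas : ∀ i, Measurable (X i))
    (hindep : iIndepFun (fun i : Fin n => X i) ℙ)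
    (hident : ∀ i : Fin n, IdentDistrib (X i) (X 0) ℙ ℙ)
    (hL2 : MemLp (X 0) 2 ℙ)
    (hmean : ∫ ω, X 0 ω ∂ℙ = μ)
    (hvar : ∫ ω, (X 0 ω - μ) ^ 2 ∂ℙ = σ ^ 2)
    (ε : ℝ) (hε : ε = 6 * σ * Real.sqrt ((⌈Real.log (1 / δ)⌉₊ : ℝ) / n))
    (sgn : ℝ) (hsgn : sgn = 1 ∨ sgn = -1) :
    (ℙ {ω | Real.exp ((K : ℝ) / 2) ≤
        ∏ k ∈ Finset.range K,
          (if ε < sgn * (blockAvg m X k ω - μ) then Real.exp 1 else 1)}).toReal ≤ δ := by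
  -- basic numerics
  set L : ℕ := ⌈Real.log (1 / δ)⌉₊ with hLdef
  have hl : 0 < Real.log (1 / δ) :=
    Real.log_pos (by rw [one_div]; exact one_lt_inv_iff₀.mpr ⟨hδ0, hδ1⟩)
  have hL1 : 1 ≤ L := Nat.one_le_iff_ne_zero.mpr (by positivity)
  have hK1 : 1 ≤ K := by rw [hK]; exact Nat.one_le_iff_ne_zero.mpr (by positivity)
  have hn0 : 0 < n := by rw [hn]; exact Nat.mul_pos (by omega) hm
  have hKl : (4.5 : ℝ) * Real.log (1 / δ) ≤ K := by rw [hK]; exact Nat.le_ceil _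
  have hK5L : (K : ℝ) ≤ 5 * L := by
    rw [hK]
    have h5 : (⌈(4.5 : ℝ) * Real.log (1 / δ)⌉₊ : ℕ) ≤ 5 * L := by
      apply Nat.ceil_le.mpr
      push_cast
      nlinarith [Nat.le_ceil (Real.log (1/δ)), hl]
    exact_mod_cast h5
  have hε0 : 0 < ε := by
    rw [hε]
    have h1 : (0:ℝ) < (L:ℝ)/n := by positivity
    positivity
  -- index bound
  have hidx : ∀ k < K, ∀ j < m, k * m + j < n := by
    intro k hk j hj
    calc k * m + j < k * m + m := by omega
    _ = (k+1) * m := by ring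
    _ ≤ K * m := Nat.mul_le_mul_right m (by omega)
    _ = n := hn.symm
  -- per-sample facts
  have hmem : ∀ i : Fin n, MemLp (X i) 2 ℙ := fun i => (hident i).symm.memLp_snd hL2
  have hvar0 : variance (X 0) ℙ = σ ^ 2 := by
    rw [variance_eq_integral hL2.aestronglyMeasurable.aemeasurable]
    simp only [hmean]
    rw [← hvar]
  have hvarI : ∀ i : Fin n, variance (X i) ℙ = σ ^ 2 := fun i => by
    rw [(hident i).variance_eq, hvar0]
  have hmeanI : ∀ i : Fin n, ∫ ω, X i ω ∂ℙ = μ := fun i => by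
    rw [(hident i).integral_eq, hmean]
  -- Chebyshev for blocks
  have hcheb : ∀ k < K, (ℙ {ω | ε ≤ |blockAvg m X k ω - μ|}).toReal ≤ (σ^2/m) / ε^2 := by
    intro k hkK
    set Z : Ω → ℝ := blockAvg m X k with hZ
    have hZeq : Z = (m : ℝ)⁻¹ • ∑ j ∈ Finset.range m, (fun ω => X (k*m+j) ω) := by
      funext ω
      simp [hZ, blockAvg, div_eq_inv_mul, Finset.sum_apply]
    have hmemZ : MemLp Z 2 ℙ := by
      rw [hZeq]
      exact (memLp_finset_sum' (f := fun j ω => X (k*m+j) ω) _ (fun j hj =>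
        hmem ⟨k*m+j, hidx k hkK j (Finset.mem_range.mp hj)⟩)).const_smul _
    have hmeanZ : ∫ ω, Z ω ∂ℙ = μ := by
      rw [hZeq]
      simp only [Pi.smul_apply, Finset.sum_apply, smul_eq_mul]
      rw [integral_const_mul, integral_finset_sum _ (fun j hj =>
        (hmem ⟨k*m+j, hidx k hkK j (Finset.mem_range.mp hj)⟩).integrable one_le_two)]
      have h2 : ∀ j ∈ Finset.range m, ∫ ω, X (k*m+j) ω ∂ℙ = μ := fun j hj =>
        hmeanI ⟨k*m+j, hidx k hkK j (Finset.mem_range.mp hj)⟩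
      rw [Finset.sum_congr rfl h2]
      simp
      field_simp
    have hvarZ : variance Z ℙ = σ^2 / m := by
      rw [hZeq, variance_smul]
      rw [IndepFun.variance_sum
        (fun j hj => hmem ⟨k*m+j, hidx k hkK j (Finset.mem_range.mp hj)⟩) ?_]
      · rw [Finset.sum_congr rfl (fun j hj =>
          hvarI ⟨k*m+j, hidx k hkK j (Finset.mem_range.mp hj)⟩)]
        simp [Finset.sum_const]
        field_simp
      · intro a ha b hb hab
        simp only [Finset.coe_range, Set.mem_Iio] at ha hb
        have h1 : (⟨k*m+a, hidx k hkK a ha⟩ : Fin n) ≠ ⟨k*m+b, hidx k hkK b hb⟩ := by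
          simp only [ne_eq, Fin.mk.injEq]
          omega
        exact hindep.indepFun h1
    have hch := meas_ge_le_variance_div_sq (μ := (ℙ : Measure Ω)) hmemZ hε0
    rw [hmeanZ] at hch
    calc (ℙ {ω | ε ≤ |Z ω - μ|}).toReal
        ≤ (ENNReal.ofReal (variance Z ℙ / ε^2)).toReal :=
          ENNReal.toReal_mono (by simp) hch
      _ = variance Z ℙ / ε^2 :=
          ENNReal.toReal_ofReal (div_nonneg (variance_nonneg _ _) (by positivity))
      _ = (σ^2/m) / ε^2 := by rw [hvarZ]
  -- arithmetic: the Chebyshev bound equals K/(36 L) ≤ 5/36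
  have harith : (σ^2/m) / ε^2 ≤ 5/36 := by
    have hε2 : ε^2 = 36 * σ^2 * ((L:ℝ)/n) := by
      rw [hε, mul_pow, mul_pow, Real.sq_sqrt (by positivity)]
      ring
    have hneq : (σ^2/m) / ε^2 = (K:ℝ)/(36*L) := by
      rw [hε2, hn]
      have hm0 : (m:ℝ) ≠ 0 := Nat.cast_ne_zero.mpr hm.ne'
      have hL0 : (L:ℝ) ≠ 0 := Nat.cast_ne_zero.mpr (by omega)
      have hσ0 : σ ≠ 0 := hσ.ne'
      have hK0 : (K:ℝ) ≠ 0 := Nat.cast_ne_zero.mpr (by omega)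
      push_cast
      field_simp
    rw [hneq, div_le_div_iff₀ (by positivity) (by norm_num)]
    nlinarith [hK5L, show (1:ℝ) ≤ L from by exact_mod_cast hL1]
  -- the per-block factor
  set g : ℕ → Ω → ℝ := fun k ω => if ε < sgn * (blockAvg m X k ω - μ) then Real.exp 1 else 1
    with hgdef
  have hge1 : ∀ k ω, (1:ℝ) ≤ g k ω := by
    intro k ω
    simp only [hgdef]
    split
    · exact Real.one_le_exp (by norm_num)
    · exact le_refl 1
  have hgle : ∀ k ω, g k ω ≤ Real.exp 1 := by
    intro k ω
    simp only [hgdef]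
    split
    · exact le_refl _
    · exact Real.one_le_exp (by norm_num)
  have hBAmeas : ∀ k, Measurable (fun ω => blockAvg m X k ω) := by
    intro k
    unfold blockAvg
    exact (Finset.measurable_sum _ (fun j _ => hmeas _)).div_const _
  have hBmeas : ∀ k, MeasurableSet {ω | ε < sgn * (blockAvg m X k ω - μ)} :=
    fun k => measurableSet_lt measurable_const
      (((hBAmeas k).sub measurable_const).const_mul sgn)
  have hgmeas : ∀ k, Measurable (g k) := by
    intro k
    simp only [hgdef]
    exact Measurable.ite (hBmeas k) measurable_const measurable_const
  have hprodmeas : ∀ s : Finset ℕ, Measurable (fun ω => ∏ k ∈ s, g k ω) := fun s =>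
    Finset.measurable_prod _ (fun k _ => hgmeas k)
  have hprodint : ∀ s : Finset ℕ, Integrable (fun ω => ∏ k ∈ s, g k ω) ℙ := by
    intro s
    apply Integrable.mono' (integrable_const ((Real.exp 1)^s.card))
      (hprodmeas s).aestronglyMeasurable
    apply ae_of_all
    intro ω
    rw [Real.norm_eq_abs,
      abs_of_nonneg (Finset.prod_nonneg fun k _ => le_trans zero_le_one (hge1 k ω))]
    calc ∏ k ∈ s, g k ω ≤ ∏ k ∈ s, Real.exp 1 :=
          Finset.prod_le_prod (fun k _ => le_trans zero_le_one (hge1 k ω))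
            (fun k _ => hgle k ω)
      _ = (Real.exp 1)^s.card := by rw [Finset.prod_const]
  have hgint : ∀ k, Integrable (g k) ℙ := by
    intro k
    have h := hprodint {k}
    simpa using h
  -- product of integrals
  set Sb : ℕ → Finset (Fin n) := fun k => Finset.univ.filter (fun x : Fin n => (x:ℕ)/m = k)
    with hSbdef
  have hSbmem : ∀ k (x : Fin n), x ∈ Sb k ↔ (x:ℕ)/m = k := by
    intro k x
    simp [hSbdef]
  have hSbdisj : ∀ i k, i ≠ k → Disjoint (Sb i) (Sb k) := by
    intro i k hik
    rw [Finset.disjoint_left]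
    intro x hxi hxk
    rw [hSbmem] at hxi hxk
    omega
  have hsum : ∀ k, k < K → ∀ ω, ∑ x ∈ Sb k, X (x:ℕ) ω = ∑ j ∈ Finset.range m, X (k*m+j) ω := by
    intro k hk ω
    refine Finset.sum_bij' (fun x _ => (x:ℕ) % m)
      (fun a ha => (⟨k*m+a, hidx k hk a (Finset.mem_range.mp ha)⟩ : Fin n)) ?_ ?_ ?_ ?_ ?_
    · intro x hx
      exact Finset.mem_range.mpr (Nat.mod_lt _ hm)
    · intro a ha
      rw [hSbmem]
      show (k * m + a) / m = k
      rw [mul_comm, Nat.mul_add_div hm, Nat.div_eq_of_lt (Finset.mem_range.mp ha)]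
      omega
    · intro x hx
      rw [hSbmem] at hx
      apply Fin.ext
      show k * m + (x:ℕ) % m = (x:ℕ)
      rw [← hx]; exact Nat.div_add_mod' _ _
    · intro a ha
      show (k * m + a) % m = a
      rw [add_comm, Nat.add_mul_mod_self_right, Nat.mod_eq_of_lt (Finset.mem_range.mp ha)]
    · intro x hx
      rw [hSbmem] at hx
      have h2 : k * m + (x:ℕ) % m = (x:ℕ) := by
        rw [← hx]; exact Nat.div_add_mod' _ _
      show X (x:ℕ) ω = X (k * m + (x:ℕ) % m) ω
      rw [h2]
  have hfil : ∀ k (T : Finset (Fin n)), Sb k ⊆ T →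
      T.filter (fun x : Fin n => (x:ℕ)/m = k) = Sb k := by
    intro k T hsub
    ext x
    rw [Finset.mem_filter, hSbmem]
    exact ⟨fun h => h.2, fun h => ⟨hsub ((hSbmem k x).mpr h), h⟩⟩
  set φ : (T : Finset (Fin n)) → ℕ → ((x : T) → ℝ) → ℝ := fun T k v =>
    if ε < sgn * ((∑ x ∈ T.attach, if ((x : Fin n) : ℕ)/m = k then v x else 0)/m - μ)
    then Real.exp 1 else 1 with hφdef
  have hφmeas : ∀ (T : Finset (Fin n)) k, Measurable (φ T k) := by
    intro T k
    have hsm : Measurable (fun v : (x : T) → ℝ =>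
        ∑ x ∈ T.attach, if ((x : Fin n) : ℕ)/m = k then v x else 0) := by
      apply Finset.measurable_sum
      intro x _
      by_cases h : ((x : Fin n) : ℕ)/m = k
      · simpa [h] using measurable_pi_apply x
      · simp [h]
    exact Measurable.ite (measurableSet_lt measurable_const
      (((hsm.div_const _).sub measurable_const).const_mul sgn)) measurable_const measurable_const
  have heval : ∀ k, k < K → ∀ (T : Finset (Fin n)), Sb k ⊆ T → ∀ ω,
      φ T k (fun x => X ((x : Fin n) : ℕ) ω) = g k ω := by
    intro k hk T hsub ω
    have hs : (∑ x ∈ T.attach, if ((x : Fin n) : ℕ)/m = k then X ((x : Fin n) : ℕ) ω else 0)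
        = ∑ j ∈ Finset.range m, X (k*m+j) ω := by
      rw [Finset.sum_attach T (fun y => if (y:ℕ)/m = k then X (y:ℕ) ω else 0)]
      rw [← Finset.sum_filter, hfil k T hsub, hsum k hk ω]
    simp only [hφdef, hs, hgdef]
    rfl
  have hprodeq : ∀ s : Finset ℕ, s ⊆ Finset.range K →
      ∫ ω, ∏ k ∈ s, g k ω ∂ℙ = ∏ k ∈ s, ∫ ω, g k ω ∂ℙ := by
    intro s
    induction s using Finset.induction_on with
    | empty => simp
    | insert a s' ha ih =>
      intro hsub
      have haK : a ∈ Finset.range K := hsub (Finset.mem_insert_self a s')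
      have hs'K : s' ⊆ Finset.range K := fun x hx => hsub (Finset.mem_insert_of_mem hx)
      have hdisj : Disjoint (Sb a) (s'.biUnion Sb) := by
        rw [Finset.disjoint_biUnion_right]
        intro k hk
        exact hSbdisj a k (fun h => ha (h ▸ hk))
      have base := hindep.indepFun_finset (Sb a) (s'.biUnion Sb) hdisj (fun i => hmeas i)
      have comp := base.comp (hφmeas (Sb a) a)
        (Finset.measurable_prod s' (fun k _ => hφmeas (s'.biUnion Sb) k))
      have he1 : ((fun v => φ (Sb a) a v) ∘ (fun ω (x : Sb a) => X ((x : Fin n) : ℕ) ω))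
          = g a := by
        funext ω
        exact heval a (Finset.mem_range.mp haK) (Sb a) (le_refl _) ω
      have he2 : ((fun v => ∏ k ∈ s', φ (s'.biUnion Sb) k v) ∘
          (fun ω (x : s'.biUnion Sb) => X ((x : Fin n) : ℕ) ω))
          = fun ω => ∏ k ∈ s', g k ω := by
        funext ω
        simp only [Function.comp_apply]
        refine Finset.prod_congr rfl (fun k hk => ?_)
        exact heval k (Finset.mem_range.mp (hs'K hk)) _
          (fun x hx => Finset.mem_biUnion.mpr ⟨k, hk, hx⟩) ω
      rw [he1, he2] at comp
      have hmul := IndepFun.integral_mul_eq_mul_integral (μ := ℙ) (X := g a)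
        (Y := fun ω => ∏ k ∈ s', g k ω) comp (hgint a).aestronglyMeasurable
        (hprodint s').aestronglyMeasurable
      simp only [Finset.prod_insert ha]
      calc ∫ ω, g a ω * ∏ k ∈ s', g k ω ∂ℙ
          = ∫ ω, (g a * fun ω' => ∏ k ∈ s', g k ω') ω ∂ℙ := by rfl
        _ = (∫ ω, g a ω ∂ℙ) * ∫ ω, ∏ k ∈ s', g k ω ∂ℙ := hmul
        _ = (∫ ω, g a ω ∂ℙ) * ∏ k ∈ s', ∫ ω, g k ω ∂ℙ := by rw [ih hs'K]
  -- value of each integral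
  have hEg : ∀ k, k < K → ∫ ω, g k ω ∂ℙ ≤ Real.exp ((Real.exp 1 - 1) * (5/36)) := by
    intro k hk
    have hrepr : g k = fun ω =>
        1 + Set.indicator {ω' | ε < sgn * (blockAvg m X k ω' - μ)}
          (fun _ => Real.exp 1 - 1) ω := by
      funext ω
      simp only [hgdef, Set.indicator_apply, Set.mem_setOf_eq]
      by_cases h : ε < sgn * (blockAvg m X k ω - μ)
      · simp [h]
      · simp [h]
    have hval : ∫ ω, g k ω ∂ℙ
        = 1 + (ℙ {ω' | ε < sgn * (blockAvg m X k ω' - μ)}).toReal * (Real.exp 1 - 1) := by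
      rw [hrepr, integral_add (integrable_const 1)
        ((integrable_const (Real.exp 1 - 1)).indicator (hBmeas k))]
      rw [integral_indicator_const _ (hBmeas k)]
      simp [smul_eq_mul, measureReal_def]
    have hq : (ℙ {ω' | ε < sgn * (blockAvg m X k ω' - μ)}).toReal ≤ 5/36 := by
      have hsubq : {ω' | ε < sgn * (blockAvg m X k ω' - μ)}
          ⊆ {ω' | ε ≤ |blockAvg m X k ω' - μ|} := by
        intro ω hω
        simp only [Set.mem_setOf_eq] at hω ⊢
        rcases hsgn with h | h
        · rw [h, one_mul] at hω
          exact le_trans hω.le (le_abs_self _)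
        · rw [h] at hω
          have : -(blockAvg m X k ω - μ) ≤ |blockAvg m X k ω - μ| := neg_le_abs _
          nlinarith [hω]
      calc (ℙ {ω' | ε < sgn * (blockAvg m X k ω' - μ)}).toReal
          ≤ (ℙ {ω' | ε ≤ |blockAvg m X k ω' - μ|}).toReal :=
            ENNReal.toReal_mono (by simp) (measure_mono hsubq)
        _ ≤ (σ^2/m)/ε^2 := hcheb k hk
        _ ≤ 5/36 := harith
    have hc0 : (0:ℝ) ≤ Real.exp 1 - 1 := by
      have := Real.one_le_exp (le_of_lt one_pos)
      linarith
    calc ∫ ω, g k ω ∂ℙ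
        = 1 + (ℙ {ω' | ε < sgn * (blockAvg m X k ω' - μ)}).toReal * (Real.exp 1 - 1) := hval
      _ ≤ 1 + (5/36) * (Real.exp 1 - 1) := by nlinarith [hq, hc0]
      _ ≤ Real.exp ((Real.exp 1 - 1) * (5/36)) := by
          have := Real.add_one_le_exp ((Real.exp 1 - 1) * (5/36))
          linarith
  have hEgpos : ∀ k, (0:ℝ) ≤ ∫ ω, g k ω ∂ℙ :=
    fun k => integral_nonneg (fun ω => le_trans zero_le_one (hge1 k ω))
  -- Markov
  have hGnn : 0 ≤ᵐ[(ℙ : Measure Ω)] fun ω => ∏ k ∈ Finset.range K, g k ω :=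
    ae_of_all _ (fun ω => Finset.prod_nonneg fun k _ => le_trans zero_le_one (hge1 k ω))
  have hmark := mul_meas_ge_le_integral_of_nonneg hGnn (hprodint (Finset.range K))
    (Real.exp ((K:ℝ)/2))
  have hEGbound : ∫ ω, ∏ k ∈ Finset.range K, g k ω ∂ℙ
      ≤ Real.exp ((K:ℝ) * ((Real.exp 1 - 1) * (5/36))) := by
    rw [hprodeq (Finset.range K) (le_refl _)]
    calc ∏ k ∈ Finset.range K, ∫ ω, g k ω ∂ℙ
        ≤ ∏ k ∈ Finset.range K, Real.exp ((Real.exp 1 - 1) * (5/36)) :=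
          Finset.prod_le_prod (fun k _ => hEgpos k)
            (fun k hk => hEg k (Finset.mem_range.mp hk))
      _ = Real.exp ((Real.exp 1 - 1) * (5/36)) ^ K := by
          rw [Finset.prod_const, Finset.card_range]
      _ = Real.exp ((K:ℝ) * ((Real.exp 1 - 1) * (5/36))) := (Real.exp_nat_mul _ K).symm
  -- final numerics
  have hfinal : Real.exp (-((K:ℝ)/2)) * Real.exp ((K:ℝ) * ((Real.exp 1 - 1) * (5/36))) ≤ δ := by
    rw [← Real.exp_add]
    have hδeq : δ = Real.exp (Real.log δ) := (Real.exp_log hδ0).symm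
    rw [hδeq]
    apply Real.exp_le_exp.mpr
    have hlog : Real.log (1/δ) = - Real.log δ := by rw [one_div, Real.log_inv]
    have he := Real.exp_one_lt_d9
    have hK0 : (0:ℝ) ≤ K := Nat.cast_nonneg K
    have h1 : (Real.exp 1 - 1) * (5/36 : ℝ) ≤ 0.24 := by nlinarith [he]
    have h2 : (K:ℝ) * ((Real.exp 1 - 1) * (5/36)) ≤ (K:ℝ) * 0.24 :=
      mul_le_mul_of_nonneg_left h1 hK0
    linarith [h2, hKl, hl, hlog.le, hlog.ge]
  calc (ℙ {ω | Real.exp ((K : ℝ) / 2) ≤ ∏ k ∈ Finset.range K, g k ω}).toReal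
      ≤ Real.exp (-((K:ℝ)/2)) * ∫ ω, ∏ k ∈ Finset.range K, g k ω ∂ℙ := by
        rw [Real.exp_neg]
        rw [inv_mul_eq_div, le_div_iff₀ (Real.exp_pos _)]
        calc (ℙ {ω | Real.exp ((K : ℝ) / 2) ≤ ∏ k ∈ Finset.range K, g k ω}).toReal
            * Real.exp ((K:ℝ)/2)
            = Real.exp ((K:ℝ)/2) *
              (ℙ {ω | Real.exp ((K : ℝ) / 2) ≤ ∏ k ∈ Finset.range K, g k ω}).toReal := by ring
          _ ≤ _ := hmark
    _ ≤ Real.exp (-((K:ℝ)/2)) * Real.exp ((K:ℝ) * ((Real.exp 1 - 1) * (5/36))) := by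
        apply mul_le_mul_of_nonneg_left hEGbound (le_of_lt (Real.exp_pos _))
    _ ≤ δ := hfinal

set_option maxHeartbeats 1000000 in
/-- **Median-of-means concentration (two-sided).**
For `δ ∈ (0,1)`, with `K = ⌈4.5 log(1/δ)⌉` blocks and `n = K * m ≥ 18 ⌈log(1/δ)⌉` i.i.d.
samples with mean `μ` and variance `σ²`, the median-of-means estimator `med` satisfies
`|med - μ| ≤ 6 σ √(⌈log(1/δ)⌉ / n)` with probability at least `1 - 2 δ`. -/
theorem mom_concentration_two_sided
    {Ω : Type*} [MeasureSpace Ω] [IsProbabilityMeasure (ℙ : Measure Ω)]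
    (δ : ℝ) (hδ : δ ∈ Set.Ioo (0 : ℝ) 1)
    (K m n : ℕ) (hm : 0 < m)
    (hK : K = ⌈(4.5 : ℝ) * Real.log (1 / δ)⌉₊)
    (hn : n = K * m) (hn18 : 18 * ⌈Real.log (1 / δ)⌉₊ ≤ n)
    (X : ℕ → Ω → ℝ) (μ σ : ℝ) (hσ : 0 ≤ σ)
    (hmeas : ∀ i, Measurable (X i))
    (hindep : iIndepFun (fun i : Fin n => X i) ℙ)
    (hident : ∀ i : Fin n, IdentDistrib (X i) (X 0) ℙ ℙ)
    (hL2 : MemLp (X 0) 2 ℙ)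
    (hmean : ∫ ω, X 0 ω ∂ℙ = μ)
    (hvar : ∫ ω, (X 0 ω - μ) ^ 2 ∂ℙ = σ ^ 2)
    (med : Ω → ℝ) (hmed : IsMedianOfMeans K m X med) :
    1 - 2 * δ ≤
      (ℙ {ω | |med ω - μ| ≤
        6 * σ * Real.sqrt ((⌈Real.log (1 / δ)⌉₊ : ℝ) / n)}).toReal := by
  obtain ⟨hδ0, hδ1⟩ := hδ
  have hl : 0 < Real.log (1 / δ) :=
    Real.log_pos (by rw [one_div]; exact one_lt_inv_iff₀.mpr ⟨hδ0, hδ1⟩)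
  have hK1 : 1 ≤ K := by rw [hK]; exact Nat.one_le_iff_ne_zero.mpr (by positivity)
  set ε : ℝ := 6 * σ * Real.sqrt ((⌈Real.log (1 / δ)⌉₊ : ℝ) / n) with hεdef
  have hidx : ∀ k < K, ∀ j < m, k * m + j < n := by
    intro k hk j hj
    calc k * m + j < k * m + m := by omega
    _ = (k+1) * m := by ring
    _ ≤ K * m := Nat.mul_le_mul_right m (by omega)
    _ = n := hn.symm
  rcases eq_or_lt_of_le hσ with hσ0 | hσpos
  · -- degenerate case `σ = 0` : all samples are a.s. equal to `μ`
    have hsq : Integrable (fun ω => (X 0 ω - μ)^2) ℙ := by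
      have h2 := (hL2.sub (memLp_const μ)).integrable_sq
      simpa using h2
    have hzero : ∀ᵐ ω ∂ℙ, X 0 ω = μ := by
      have h0 : ∫ ω, (X 0 ω - μ)^2 ∂ℙ = 0 := by rw [hvar, ← hσ0]; norm_num
      have h1 := (integral_eq_zero_iff_of_nonneg (fun ω => sq_nonneg _) hsq).mp h0
      filter_upwards [h1] with ω hω
      have h2 : (X 0 ω - μ)^2 = 0 := hω
      nlinarith [h2]
    have hXi : ∀ i : Fin n, ∀ᵐ ω ∂ℙ, X i ω = μ := by
      intro i
      have hset : MeasurableSet ({μ}ᶜ : Set ℝ) := (measurableSet_singleton μ).compl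
      have h00 : ℙ (X 0 ⁻¹' {μ}ᶜ) = 0 := by
        have h01 := ae_iff.mp hzero
        convert h01 using 2
        ext; simp
      have hi : ℙ (X (i:ℕ) ⁻¹' {μ}ᶜ) = 0 := by
        rw [← Measure.map_apply (hmeas (i:ℕ)) hset, (hident i).map_eq,
          Measure.map_apply (hmeas 0) hset, h00]
      rw [ae_iff]
      convert hi using 2
      ext; simp
    have hall : ∀ᵐ ω ∂ℙ, ∀ i : Fin n, X i ω = μ := ae_all_iff.mpr hXi
    have hgood : ∀ᵐ ω ∂ℙ, |med ω - μ| ≤ ε := by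
      filter_upwards [hall] with ω hω
      have hBA : ∀ k < K, blockAvg m X k ω = μ := by
        intro k hk
        unfold blockAvg
        rw [Finset.sum_congr rfl (fun j hj =>
          hω ⟨k*m+j, hidx k hk j (Finset.mem_range.mp hj)⟩)]
        rw [Finset.sum_const, Finset.card_range, nsmul_eq_mul]
        have hm0 : (m:ℝ) ≠ 0 := Nat.cast_ne_zero.mpr hm.ne'
        field_simp
      obtain ⟨h1, h2⟩ := hmed ω
      have hKpos : (0:ℝ) < (K:ℝ)/2 := by
        have : (1:ℝ) ≤ (K:ℝ) := by exact_mod_cast hK1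
        linarith
      have hne1 : ((Finset.range K).filter fun k => blockAvg m X k ω ≤ med ω).Nonempty :=
        Finset.card_pos.mp (by exact_mod_cast hKpos.trans_le h1)
      have hne2 : ((Finset.range K).filter fun k => med ω ≤ blockAvg m X k ω).Nonempty :=
        Finset.card_pos.mp (by exact_mod_cast hKpos.trans_le h2)
      obtain ⟨k1, hk1⟩ := hne1
      obtain ⟨k2, hk2⟩ := hne2
      have hk1' := Finset.mem_filter.mp hk1
      have hk2' := Finset.mem_filter.mp hk2
      have hb1 := hBA k1 (Finset.mem_range.mp hk1'.1)
      have hb2 := hBA k2 (Finset.mem_range.mp hk2'.1)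
      have hmedμ : med ω = μ := le_antisymm (hb2 ▸ hk2'.2) (hb1 ▸ hk1'.2)
      have hε0 : 0 ≤ ε := by
        rw [hεdef]
        positivity
      simp [hmedμ, hε0]
    have hP0 : ℙ {ω | ¬ (|med ω - μ| ≤ ε)} = 0 := ae_iff.mp hgood
    have hge : (1 : ENNReal) ≤ ℙ {ω | |med ω - μ| ≤ ε} := by
      have hsplit : (Set.univ : Set Ω) ⊆
          {ω | |med ω - μ| ≤ ε} ∪ {ω | ¬ (|med ω - μ| ≤ ε)} := by
        intro ω _
        by_cases h : |med ω - μ| ≤ ε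
        · exact Or.inl h
        · exact Or.inr h
      calc (1 : ENNReal) = ℙ Set.univ := measure_univ.symm
        _ ≤ ℙ ({ω | |med ω - μ| ≤ ε} ∪ {ω | ¬ (|med ω - μ| ≤ ε)}) := measure_mono hsplit
        _ ≤ ℙ {ω | |med ω - μ| ≤ ε} + ℙ {ω | ¬ (|med ω - μ| ≤ ε)} := measure_union_le _ _
        _ = ℙ {ω | |med ω - μ| ≤ ε} := by rw [hP0, add_zero]
    have heq : ℙ {ω | |med ω - μ| ≤ ε} = 1 := le_antisymm prob_le_one hge
    rw [heq]
    simp only [ENNReal.toReal_one]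
    linarith
  · -- main case `σ > 0`
    have hA1 := mom_aux δ hδ0 hδ1 K m n hm hK hn X μ σ hσpos hmeas hindep hident hL2
      hmean hvar ε hεdef 1 (Or.inl rfl)
    have hA2 := mom_aux δ hδ0 hδ1 K m n hm hK hn X μ σ hσpos hmeas hindep hident hL2
      hmean hvar ε hεdef (-1) (Or.inr rfl)
    set A1 : Set Ω := {ω | Real.exp ((K : ℝ) / 2) ≤ ∏ k ∈ Finset.range K,
      (if ε < 1 * (blockAvg m X k ω - μ) then Real.exp 1 else 1)} with hA1def
    set A2 : Set Ω := {ω | Real.exp ((K : ℝ) / 2) ≤ ∏ k ∈ Finset.range K,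
      (if ε < (-1) * (blockAvg m X k ω - μ) then Real.exp 1 else 1)} with hA2def
    have hBAmeas : ∀ k, Measurable (fun ω => blockAvg m X k ω) := by
      intro k
      unfold blockAvg
      exact (Finset.measurable_sum _ (fun j _ => hmeas _)).div_const _
    have hA1meas : MeasurableSet A1 :=
      measurableSet_le measurable_const (Finset.measurable_prod _ (fun k _ =>
        Measurable.ite (measurableSet_lt measurable_const
          (((hBAmeas k).sub measurable_const).const_mul 1))
          measurable_const measurable_const))
    have hA2meas : MeasurableSet A2 :=
      measurableSet_le measurable_const (Finset.measurable_prod _ (fun k _ =>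
        Measurable.ite (measurableSet_lt measurable_const
          (((hBAmeas k).sub measurable_const).const_mul (-1)))
          measurable_const measurable_const))
    have hone_le : ∀ (c : ℝ) (k : ℕ) (ω : Ω),
        (1:ℝ) ≤ (if ε < c * (blockAvg m X k ω - μ) then Real.exp 1 else 1) := by
      intro c k ω
      split
      · exact Real.one_le_exp (by norm_num)
      · exact le_refl 1
    have hincl : (A1 ∪ A2)ᶜ ⊆ {ω | |med ω - μ| ≤ ε} := by
      intro ω hω
      simp only [Set.mem_compl_iff, Set.mem_union, not_or, hA1def, hA2def,
        Set.mem_setOf_eq] at hω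
      obtain ⟨hω1, hω2⟩ := hω
      rw [Set.mem_setOf_eq, abs_le]
      constructor
      · -- `-ε ≤ med ω - μ`
        by_contra hcon
        push_neg at hcon
        apply hω2
        obtain ⟨h1, _⟩ := hmed ω
        set F := (Finset.range K).filter (fun k => blockAvg m X k ω ≤ med ω) with hF
        have hprodF : ∀ k ∈ F,
            (if ε < (-1) * (blockAvg m X k ω - μ) then Real.exp 1 else 1) = Real.exp 1 := by
          intro k hk
          rw [if_pos]
          have hble := (Finset.mem_filter.mp hk).2
          nlinarith [hble, hcon]
        calc Real.exp ((K:ℝ)/2) ≤ Real.exp ((F.card : ℕ) : ℝ) := Real.exp_le_exp.mpr h1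
          _ = Real.exp 1 ^ (F.card : ℕ) := by rw [← Real.exp_nat_mul, mul_one]
          _ = ∏ k ∈ F, (if ε < (-1) * (blockAvg m X k ω - μ) then Real.exp 1 else 1) := by
              rw [Finset.prod_congr rfl hprodF, Finset.prod_const]
          _ ≤ ∏ k ∈ Finset.range K,
              (if ε < (-1) * (blockAvg m X k ω - μ) then Real.exp 1 else 1) := by
            have hFsub : F ⊆ Finset.range K := hF ▸ Finset.filter_subset _ _
            rw [← Finset.prod_sdiff hFsub]
            have h1le : (1:ℝ) ≤ ∏ k ∈ Finset.range K \ F,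
                (if ε < (-1) * (blockAvg m X k ω - μ) then Real.exp 1 else 1) := by
              calc (1:ℝ) = ∏ k ∈ Finset.range K \ F, 1 := by rw [Finset.prod_const_one]
                _ ≤ _ := Finset.prod_le_prod (fun i _ => zero_le_one)
                    (fun i _ => hone_le (-1) i ω)
            exact le_mul_of_one_le_left
              (Finset.prod_nonneg (fun i _ => le_trans zero_le_one (hone_le (-1) i ω))) h1le
      · -- `med ω - μ ≤ ε`
        by_contra hcon
        push_neg at hcon
        apply hω1
        obtain ⟨_, h2⟩ := hmed ω
        set F := (Finset.range K).filter (fun k => med ω ≤ blockAvg m X k ω) with hF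
        have hprodF : ∀ k ∈ F,
            (if ε < 1 * (blockAvg m X k ω - μ) then Real.exp 1 else 1) = Real.exp 1 := by
          intro k hk
          rw [if_pos]
          have hble := (Finset.mem_filter.mp hk).2
          nlinarith [hble, hcon]
        calc Real.exp ((K:ℝ)/2) ≤ Real.exp ((F.card : ℕ) : ℝ) := Real.exp_le_exp.mpr h2
          _ = Real.exp 1 ^ (F.card : ℕ) := by rw [← Real.exp_nat_mul, mul_one]
          _ = ∏ k ∈ F, (if ε < 1 * (blockAvg m X k ω - μ) then Real.exp 1 else 1) := by
              rw [Finset.prod_congr rfl hprodF, Finset.prod_const]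
          _ ≤ ∏ k ∈ Finset.range K,
              (if ε < 1 * (blockAvg m X k ω - μ) then Real.exp 1 else 1) := by
            have hFsub : F ⊆ Finset.range K := hF ▸ Finset.filter_subset _ _
            rw [← Finset.prod_sdiff hFsub]
            have h1le : (1:ℝ) ≤ ∏ k ∈ Finset.range K \ F,
                (if ε < 1 * (blockAvg m X k ω - μ) then Real.exp 1 else 1) := by
              calc (1:ℝ) = ∏ k ∈ Finset.range K \ F, 1 := by rw [Finset.prod_const_one]
                _ ≤ _ := Finset.prod_le_prod (fun i _ => zero_le_one)
                    (fun i _ => hone_le 1 i ω)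
            exact le_mul_of_one_le_left
              (Finset.prod_nonneg (fun i _ => le_trans zero_le_one (hone_le 1 i ω))) h1le
    have hAmeas : MeasurableSet (A1 ∪ A2) := hA1meas.union hA2meas
    have hmono : ℙ ((A1 ∪ A2)ᶜ) ≤ ℙ {ω | |med ω - μ| ≤ ε} := measure_mono hincl
    have hcompl : (ℙ ((A1 ∪ A2)ᶜ)).toReal = 1 - (ℙ (A1 ∪ A2)).toReal := by
      have hsum := measure_add_measure_compl (μ := (ℙ : Measure Ω)) hAmeas
      rw [measure_univ] at hsum
      have h2 : (ℙ (A1 ∪ A2)).toReal + (ℙ ((A1 ∪ A2)ᶜ)).toReal = 1 := by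
        rw [← ENNReal.toReal_add (measure_ne_top _ _) (measure_ne_top _ _), hsum]
        simp
      linarith
    have hunionle : (ℙ (A1 ∪ A2)).toReal ≤ (ℙ A1).toReal + (ℙ A2).toReal := by
      calc (ℙ (A1 ∪ A2)).toReal ≤ (ℙ A1 + ℙ A2).toReal :=
            ENNReal.toReal_mono
              (ENNReal.add_ne_top.mpr ⟨measure_ne_top _ _, measure_ne_top _ _⟩)
              (measure_union_le _ _)
        _ = (ℙ A1).toReal + (ℙ A2).toReal :=
            ENNReal.toReal_add (measure_ne_top _ _) (measure_ne_top _ _)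
    calc 1 - 2*δ ≤ 1 - ((ℙ A1).toReal + (ℙ A2).toReal) := by linarith [hA1, hA2]
      _ ≤ (ℙ ((A1 ∪ A2)ᶜ)).toReal := by rw [hcompl]; linarith [hunionle]
      _ ≤ (ℙ {ω | |med ω - μ| ≤ ε}).toReal :=
          ENNReal.toReal_mono (measure_ne_top _ _) hmono
end

section
/- Let g be a square-integrable random vector in ℝ^d (d ≥ 2) with mean G = E[g] and covariance Σ = E[(g − G)(g − G)ᵀ], and let v ∈ ℝ^d be a fixed vector with ‖v‖₂ ≤ D. Let g₁,…,gₙ be n independent copies of g with n ≥ 72·⌈log d⌉ and n divisible by K = ⌈18·log d⌉, and let x̃ be the median-of-means estimator with parameter K applied to the real samples ⟨g₁, v⟩,…,⟨gₙ, v⟩. Then with probability at least 1 − 2·d^{−4}, |x̃ − ⟨G, v⟩| ≤ 12·D·√(‖Σ‖_op)·√(⌈log d⌉/n). -/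
open MeasureTheory ProbabilityTheory Real
open scoped RealInnerProductSpace

/-- The operator (spectral) norm of a real `d × d` matrix, acting on Euclidean space. -/
noncomputable def matOpNorm {d : ℕ} (A : Matrix (Fin d) (Fin d) ℝ) : ℝ :=
  ‖(Matrix.toEuclideanCLM (𝕜 := ℝ) A : EuclideanSpace ℝ (Fin d) →L[ℝ] EuclideanSpace ℝ (Fin d))‖

/- ### Auxiliary lemmas -/

/-- Deterministic median argument: if strictly more than half of the block averages are
`ε`-close to `μ0`, then so is the median. -/
lemma median_dev_le {Ω : Type*} {K m : ℕ} {Y : ℕ → Ω → ℝ} {med : Ω → ℝ}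
    (hmom : IsMedianOfMeans K m Y med) (μ0 ε : ℝ) (ω : Ω)
    (hgood : (K : ℝ) / 2 <
      (((Finset.range K).filter fun k => |blockAvg m Y k ω - μ0| ≤ ε).card : ℝ)) :
    |med ω - μ0| ≤ ε := by
  classical
  obtain ⟨hLe, hGe⟩ := hmom ω
  set good := (Finset.range K).filter fun k => |blockAvg m Y k ω - μ0| ≤ ε with hgoodset
  have key : ∀ s : Finset ℕ, s ⊆ Finset.range K → (K : ℝ) / 2 ≤ (s.card : ℝ) →
      ∃ k, k ∈ good ∧ k ∈ s := by
    intro s hs hcard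
    by_contra h
    push_neg at h
    have hdisj : Disjoint good s := Finset.disjoint_left.mpr fun k hk hks => h k hk hks
    have hsub : good ∪ s ⊆ Finset.range K :=
      Finset.union_subset (Finset.filter_subset _ _) hs
    have h1 : good.card + s.card ≤ K := by
      have := Finset.card_le_card hsub
      rwa [Finset.card_union_of_disjoint hdisj, Finset.card_range] at this
    have h1' : (good.card : ℝ) + (s.card : ℝ) ≤ (K : ℝ) := by exact_mod_cast h1
    linarith
  obtain ⟨k₁, hk₁g, hk₁⟩ := key _ (Finset.filter_subset _ _) hLe
  obtain ⟨k₂, hk₂g, hk₂⟩ := key _ (Finset.filter_subset _ _) hGe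
  have h₁ := (Finset.mem_filter.mp hk₁g).2
  have h₁' := (Finset.mem_filter.mp hk₁).2
  have h₂ := (Finset.mem_filter.mp hk₂g).2
  have h₂' := (Finset.mem_filter.mp hk₂).2
  rw [abs_le] at h₁ h₂ ⊢
  constructor <;> [linarith [h₁.1]; linarith [h₂.2]]

/-- Numeric fact: `log (9/5) ≥ 4/9`. -/
lemma log_nine_fifths : (4 : ℝ) / 9 ≤ Real.log (9 / 5) := by
  rw [Real.le_log_iff_exp_le (by norm_num)]
  have h9 : Real.exp (4 / 9) ^ (9 : ℕ) = Real.exp 4 := by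
    rw [← Real.exp_nat_mul]; norm_num
  have he : Real.exp 4 ≤ (9 / 5 : ℝ) ^ (9 : ℕ) := by
    have h1 : Real.exp 4 = Real.exp 1 ^ (4 : ℕ) := by
      rw [← Real.exp_nat_mul]; norm_num
    calc Real.exp 4 = Real.exp 1 ^ (4 : ℕ) := h1
      _ ≤ 2.7182818286 ^ (4 : ℕ) :=
        pow_le_pow_left₀ (Real.exp_pos 1).le Real.exp_one_lt_d9.le 4
      _ ≤ (9 / 5 : ℝ) ^ (9 : ℕ) := by norm_num
  exact le_of_pow_le_pow_left₀ (by norm_num : (9 : ℕ) ≠ 0)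
    (by norm_num : (0 : ℝ) ≤ 9 / 5) (h9 ▸ he)

/-- Extension of a function defined on a finset of `Fin n` to all of `ℕ` (by zero). -/
noncomputable def uext {n : ℕ} (S : Finset (Fin n)) (u : {x : Fin n // x ∈ S} → ℝ) (i : ℕ) : ℝ :=
  if h : i < n then (if hS : (⟨i, h⟩ : Fin n) ∈ S then u ⟨⟨i, h⟩, hS⟩ else 0) else 0

lemma measurable_uext {n : ℕ} (S : Finset (Fin n)) (i : ℕ) :
    Measurable (fun u : {x : Fin n // x ∈ S} → ℝ => uext S u i) := by
  by_cases h : i < n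
  · by_cases hS : (⟨i, h⟩ : Fin n) ∈ S
    · simpa [uext, h, hS] using measurable_pi_apply (⟨⟨i, h⟩, hS⟩ : {x : Fin n // x ∈ S})
    · simp [uext, h, hS]
  · simp [uext, h]

/-- Functions of the partial sums of block averages over disjoint blocks are independent of a
function of the next block average. -/
lemma blocks_indep {Ω : Type*} [MeasurableSpace Ω] {μ : MeasureTheory.Measure Ω}
    {n K m : ℕ} (hn : n = K * m)
    (f : ℕ → Ω → ℝ) (hf : ∀ j, Measurable (f j))
    (hindep : iIndepFun (fun j : Fin n => f j) μ)
    (φ : ℝ → ℝ) (hφ : Measurable φ) {r : ℕ} (hr : r < K) :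
    IndepFun (fun ω => ∑ k ∈ Finset.range r, φ (blockAvg m f k ω))
      (fun ω => φ (blockAvg m f r ω)) μ := by
  classical
  set S : Finset (Fin n) := Finset.univ.filter (fun j => (j : ℕ) < r * m) with hS
  set T : Finset (Fin n) :=
    Finset.univ.filter (fun j => r * m ≤ (j : ℕ) ∧ (j : ℕ) < r * m + m) with hT
  have hdisj : Disjoint S T := by
    rw [Finset.disjoint_left]
    intro a ha hb
    simp only [hS, hT, Finset.mem_filter, Finset.mem_univ, true_and] at ha hb
    omega
  have hidx : ∀ k j : ℕ, k < r → j < m → k * m + j < r * m := by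
    intro k j hk hj
    calc k * m + j < k * m + m := by omega
      _ = (k + 1) * m := by ring
      _ ≤ r * m := Nat.mul_le_mul_right m hk
  have hrn : ∀ i : ℕ, i < r * m + m → i < n := by
    intro i hi
    have h1 : r * m + m = (r + 1) * m := by ring
    have h2 : (r + 1) * m ≤ K * m := Nat.mul_le_mul_right m hr
    omega
  set φL : ({x : Fin n // x ∈ S} → ℝ) → ℝ :=
    fun u => ∑ k ∈ Finset.range r, φ ((∑ j ∈ Finset.range m, uext S u (k * m + j)) / m) with hφL
  set φR : ({x : Fin n // x ∈ T} → ℝ) → ℝ :=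
    fun u => φ ((∑ j ∈ Finset.range m, uext T u (r * m + j)) / m) with hφR
  have hφLm : Measurable φL :=
    Finset.measurable_sum _ (fun k _ =>
      hφ.comp ((Finset.measurable_sum _ (fun j _ => measurable_uext S _)).div_const _))
  have hφRm : Measurable φR :=
    hφ.comp ((Finset.measurable_sum _ (fun j _ => measurable_uext T _)).div_const _)
  have base := (hindep.indepFun_finset S T hdisj (fun j => hf j)).comp hφLm hφRm
  convert base using 1
  · funext ω
    simp only [Function.comp_apply, hφL, blockAvg]
    refine Finset.sum_congr rfl (fun k hk => ?_)
    congr 2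
    refine Finset.sum_congr rfl (fun j hj => ?_)
    have hk' := Finset.mem_range.mp hk
    have hj' := Finset.mem_range.mp hj
    have h1 : k * m + j < r * m := hidx k j hk' hj'
    have h2 : k * m + j < n := hrn _ (by omega)
    have hmem : (⟨k * m + j, h2⟩ : Fin n) ∈ S := by
      simp only [hS, Finset.mem_filter, Finset.mem_univ, true_and]
      exact h1
    rw [uext, dif_pos h2, dif_pos hmem]
  · funext ω
    simp only [Function.comp_apply, hφR, blockAvg]
    congr 2
    refine Finset.sum_congr rfl (fun j hj => ?_)
    have hj' := Finset.mem_range.mp hj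
    have h2 : r * m + j < n := hrn _ (by omega)
    have hmem : (⟨r * m + j, h2⟩ : Fin n) ∈ T := by
      simp only [hT, Finset.mem_filter, Finset.mem_univ, true_and]
      omega
    rw [uext, dif_pos h2, dif_pos hmem]

/-- The variance of a one-dimensional projection of a random vector is controlled by the
operator norm of its covariance matrix. -/
lemma variance_inner_le {Ω : Type*} [MeasureSpace Ω] [IsProbabilityMeasure (ℙ : Measure Ω)]
    {d : ℕ} (g : Ω → EuclideanSpace ℝ (Fin d)) (hg2 : MemLp g 2 ℙ)
    (G : EuclideanSpace ℝ (Fin d)) (hG : ∫ ω, g ω ∂ℙ = G)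
    (Sig : Matrix (Fin d) (Fin d) ℝ)
    (hSig : ∀ i j, Sig i j = ∫ ω, (g ω i - G i) * (g ω j - G j) ∂ℙ)
    (v : EuclideanSpace ℝ (Fin d)) :
    variance (fun ω => ⟪g ω, v⟫) ℙ ≤ matOpNorm Sig * ‖v‖ ^ 2 := by
  classical
  have hY02 : MemLp (fun ω => ⟪g ω, v⟫) 2 ℙ := by
    have h0 : MemLp (fun a => (innerSL ℝ v) (g a)) 2 ℙ :=
      (innerSL ℝ v).comp_memLp' hg2
    have he : (fun a => (innerSL ℝ v) (g a)) = fun ω => ⟪g ω, v⟫ := by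
      funext a
      rw [innerSL_apply_apply]
      exact real_inner_comm _ _
    rwa [he] at h0
  have hmean : ∫ ω, ⟪g ω, v⟫ ∂ℙ = ⟪G, v⟫ := by
    calc ∫ ω, ⟪g ω, v⟫ ∂ℙ = ∫ ω, ⟪v, g ω⟫ ∂ℙ :=
        integral_congr_ae (Filter.Eventually.of_forall fun ω => real_inner_comm _ _)
      _ = ⟪v, ∫ ω, g ω ∂ℙ⟫ := integral_inner (hg2.integrable one_le_two) v
      _ = ⟪G, v⟫ := by rw [hG, real_inner_comm]
  have hgc : ∀ i, MemLp (fun ω => g ω i - G i) 2 ℙ := by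
    intro i
    have h1 : MemLp (fun ω => (EuclideanSpace.proj i : EuclideanSpace ℝ (Fin d) →L[ℝ] ℝ) (g ω))
        2 ℙ := (EuclideanSpace.proj i : EuclideanSpace ℝ (Fin d) →L[ℝ] ℝ).comp_memLp' hg2
    simpa [Pi.sub_def] using h1.sub (memLp_const (G i))
  have hint : ∀ i j, Integrable (fun ω => (g ω i - G i) * (g ω j - G j)) ℙ := by
    intro i j
    have h1 : MemLp ((fun ω => g ω i - G i) • fun ω => g ω j - G j) 1 ℙ :=
      MemLp.smul (hgc j) (hgc i)
    exact memLp_one_iff_integrable.mp h1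
  have hptw : ∀ ω : Ω, ⟪g ω, v⟫ - ⟪G, v⟫ = ∑ i, (g ω i - G i) * v i := by
    intro ω
    rw [← inner_sub_left, PiLp.inner_apply]
    simp [RCLike.inner_apply]
    exact Finset.sum_congr rfl fun _ _ => mul_comm _ _
  have hvar : variance (fun ω => ⟪g ω, v⟫) ℙ
      = ∫ ω, (∑ i, (g ω i - G i) * v i) ^ 2 ∂ℙ := by
    rw [variance_eq_integral hY02.1.aemeasurable, hmean]
    refine integral_congr_ae (Filter.Eventually.of_forall fun ω => ?_)
    beta_reduce
    rw [hptw ω]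
  have hexpand : ∀ ω, (∑ i, (g ω i - G i) * v i) ^ 2
      = ∑ i, ∑ j, (v i * v j) * ((g ω i - G i) * (g ω j - G j)) := by
    intro ω
    rw [sq, Finset.sum_mul_sum]
    refine Finset.sum_congr rfl fun i _ => Finset.sum_congr rfl fun j _ => by ring
  have hswap : ∫ ω, (∑ i, (g ω i - G i) * v i) ^ 2 ∂ℙ
      = ∑ i, ∑ j, (v i * v j) * Sig i j := by
    simp_rw [hexpand]
    rw [integral_finset_sum _ (fun i _ => integrable_finset_sum _
      (fun j _ => (hint i j).const_mul _))]
    refine Finset.sum_congr rfl fun i _ => ?_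
    rw [integral_finset_sum _ (fun j _ => (hint i j).const_mul _)]
    refine Finset.sum_congr rfl fun j _ => ?_
    rw [integral_const_mul, hSig i j]
  set T := (Matrix.toEuclideanCLM (𝕜 := ℝ) Sig :
    EuclideanSpace ℝ (Fin d) →L[ℝ] EuclideanSpace ℝ (Fin d)) with hT
  have happ : ∀ i, (T v) i = ∑ j, Sig i j * v j := by
    intro i
    have h1 := Matrix.ofLp_toEuclideanCLM (n := Fin d) (𝕜 := ℝ) Sig v
    have h2 := congrFun h1 i
    simp [hT, Matrix.mulVec, dotProduct]
  have hquad : ∑ i, ∑ j, (v i * v j) * Sig i j = ⟪T v, v⟫ := by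
    rw [PiLp.inner_apply]
    simp only [RCLike.inner_apply, conj_trivial]
    refine Finset.sum_congr rfl fun i _ => ?_
    rw [happ i, Finset.mul_sum]
    refine Finset.sum_congr rfl fun j _ => by ring
  have hbound : ⟪T v, v⟫ ≤ matOpNorm Sig * ‖v‖ ^ 2 := by
    calc ⟪T v, v⟫ ≤ ‖T v‖ * ‖v‖ := real_inner_le_norm _ _
      _ ≤ (‖T‖ * ‖v‖) * ‖v‖ :=
        mul_le_mul_of_nonneg_right (T.le_opNorm v) (norm_nonneg v)
      _ = matOpNorm Sig * ‖v‖ ^ 2 := by rw [matOpNorm, ← hT]; ring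
  rw [hvar, hswap, hquad]
  exact hbound

set_option maxHeartbeats 1600000

/-- **Median-of-means estimation of a directional mean (Corollary: MOM projection).**
Given `n ≥ 72⌈log d⌉` i.i.d. copies of a square-integrable random vector `g` in `ℝ^d`
(`d ≥ 2`) with mean `G` and covariance `Sig`, and a direction `v` with `‖v‖ ≤ D`, the
median-of-means estimator `xt` with `K = ⌈18 log d⌉` blocks applied to the samples
`⟨g_j, v⟩` satisfies `|xt - ⟨G, v⟩| ≤ 12 D √(‖Sig‖_op) √(⌈log d⌉ / n)` with probability
at least `1 - 2 d⁻⁴`. -/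
theorem mom_projection_concentration
    {Ω : Type*} [MeasureSpace Ω] [IsProbabilityMeasure (ℙ : Measure Ω)]
    {d : ℕ} (hd : 2 ≤ d)
    (g : Ω → EuclideanSpace ℝ (Fin d)) (hgmeas : Measurable g) (hg2 : MemLp g 2 ℙ)
    (G : EuclideanSpace ℝ (Fin d)) (hG : ∫ ω, g ω ∂ℙ = G)
    (Sig : Matrix (Fin d) (Fin d) ℝ)
    (hSig : ∀ i j, Sig i j = ∫ ω, (g ω i - G i) * (g ω j - G j) ∂ℙ)
    (v : EuclideanSpace ℝ (Fin d)) (D : ℝ) (hv : ‖v‖ ≤ D)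
    (K m n : ℕ) (hK : K = ⌈(18 : ℝ) * Real.log d⌉₊)
    (hn : n = K * m) (hn72 : 72 * ⌈Real.log d⌉₊ ≤ n)
    (gs : ℕ → Ω → EuclideanSpace ℝ (Fin d))
    (hmeas : ∀ j, Measurable (gs j))
    (hindep : iIndepFun (fun j : Fin n => gs j) ℙ)
    (hident : ∀ j : Fin n, IdentDistrib (gs j) g ℙ ℙ)
    (xt : Ω → ℝ)
    (hmom : IsMedianOfMeans K m (fun j ω => ⟪gs j ω, v⟫) xt) :
    1 - 2 / (d : ℝ) ^ 4 ≤
      (ℙ {ω | |xt ω - ⟪G, v⟫| ≤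
        12 * D * Real.sqrt (matOpNorm Sig) *
          Real.sqrt ((⌈Real.log d⌉₊ : ℝ) / n)}).toReal := by
  classical
  -- basic numerics
  have hd1 : (1 : ℝ) < (d : ℝ) := by exact_mod_cast (by omega : 1 < d)
  have hdpos : (0 : ℝ) < (d : ℝ) := lt_trans one_pos hd1
  have hlog : 0 < Real.log d := Real.log_pos hd1
  have hL1 : 1 ≤ ⌈Real.log d⌉₊ := Nat.ceil_pos.mpr hlog
  have hK0 : 0 < K := by rw [hK]; exact Nat.ceil_pos.mpr (by positivity)
  have hn0 : 0 < n := by omega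
  have hm0 : 0 < m := by
    rcases Nat.eq_zero_or_pos m with h | h
    · rw [h, Nat.mul_zero] at hn; omega
    · exact h
  have hKL : K ≤ 18 * ⌈Real.log d⌉₊ := by
    rw [hK]
    refine Nat.ceil_le.mpr ?_
    push_cast
    nlinarith [Nat.le_ceil (Real.log d)]
  have hK18 : (18 : ℝ) * Real.log d ≤ (K : ℝ) := by
    rw [hK]; exact Nat.le_ceil _
  have h2d4 : (0 : ℝ) ≤ 2 / (d : ℝ) ^ 4 := by positivity
  set L : ℕ := ⌈Real.log d⌉₊ with hLdef
  set μ0 : ℝ := ⟪G, v⟫ with hmu0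
  set S0 : ℝ := matOpNorm Sig with hS0
  have hS0nn : 0 ≤ S0 := norm_nonneg _
  have hDnn : 0 ≤ D := (norm_nonneg v).trans hv
  set Y : ℕ → Ω → ℝ := fun j ω => ⟪gs j ω, v⟫ with hYdef
  set ε : ℝ := 12 * D * Real.sqrt S0 * Real.sqrt ((L : ℝ) / n) with hεdef
  have hεnn : 0 ≤ ε := by positivity
  -- measurability and distribution of the projected samples
  have hinnerm : Measurable fun x : EuclideanSpace ℝ (Fin d) => ⟪x, v⟫ :=
    (continuous_id.inner continuous_const).measurable
  have hYmeas : ∀ j, Measurable (Y j) := fun j => hinnerm.comp (hmeas j)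
  have hYindep : iIndepFun (fun j : Fin n => Y (j : ℕ)) ℙ :=
    hindep.comp (fun _ x => ⟪x, v⟫) (fun _ => hinnerm)
  set Y0 : Ω → ℝ := fun ω => ⟪g ω, v⟫ with hY0def
  have hY0meas : Measurable Y0 := hinnerm.comp hgmeas
  have hYid : ∀ j : Fin n, IdentDistrib (Y (j : ℕ)) Y0 ℙ ℙ := fun j =>
    (hident j).comp hinnerm
  have hY02 : MemLp Y0 2 ℙ := by
    have h0 : MemLp (fun a => (innerSL ℝ v) (g a)) 2 ℙ :=
      (innerSL ℝ v).comp_memLp' hg2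
    have he : (fun a => (innerSL ℝ v) (g a)) = Y0 := by
      funext a
      rw [innerSL_apply_apply]
      exact real_inner_comm _ _
    rwa [he] at h0
  have hYj2 : ∀ j : Fin n, MemLp (Y (j : ℕ)) 2 ℙ := fun j => (hYid j).symm.memLp_snd hY02
  have hEY0 : ∫ ω, Y0 ω ∂ℙ = μ0 := by
    calc ∫ ω, Y0 ω ∂ℙ = ∫ ω, ⟪v, g ω⟫ ∂ℙ :=
        integral_congr_ae (Filter.Eventually.of_forall fun ω => real_inner_comm _ _)
      _ = ⟪v, ∫ ω, g ω ∂ℙ⟫ := integral_inner (hg2.integrable one_le_two) v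
      _ = μ0 := by rw [hG, hmu0, real_inner_comm]
  have hEYj : ∀ j : Fin n, ∫ ω, Y (j : ℕ) ω ∂ℙ = μ0 := fun j =>
    ((hYid j).integral_eq).trans hEY0
  set V : ℝ := variance Y0 ℙ with hVdef
  have hVnn : 0 ≤ V := variance_nonneg _ _
  have hVj : ∀ j : Fin n, variance (Y (j : ℕ)) ℙ = V := fun j => (hYid j).variance_eq
  have hVle : V ≤ S0 * D ^ 2 := by
    have h := variance_inner_le g hg2 G hG Sig hSig v
    have h2 : matOpNorm Sig * ‖v‖ ^ 2 ≤ S0 * D ^ 2 := by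
      rw [← hS0]
      exact mul_le_mul_of_nonneg_left (by nlinarith [norm_nonneg v]) hS0nn
    exact le_trans h h2
  -- index bound
  have hidxn : ∀ k j : ℕ, k < K → j < m → k * m + j < n := by
    intro k j hk hj
    have h1 : k * m + m = (k + 1) * m := by ring
    have h2 : (k + 1) * m ≤ K * m := Nat.mul_le_mul_right m hk
    omega
  -- block average basics
  have hZmeas : ∀ k, Measurable (blockAvg m Y k) := by
    intro k
    unfold blockAvg
    exact (Finset.measurable_sum _ (fun j _ => hYmeas _)).div_const _
  have hZinv : ∀ k, blockAvg m Y k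
      = fun ω => (m : ℝ)⁻¹ * ∑ j ∈ Finset.range m, Y (k * m + j) ω := by
    intro k
    funext ω
    rw [blockAvg, div_eq_inv_mul]
  have hZ2 : ∀ k, k < K → MemLp (blockAvg m Y k) 2 ℙ := by
    intro k hk
    rw [hZinv k]
    refine MemLp.const_mul ?_ _
    exact memLp_finset_sum _ (fun j hj =>
      hYj2 ⟨k * m + j, hidxn k j hk (Finset.mem_range.mp hj)⟩)
  have hEZ : ∀ k, k < K → ∫ ω, blockAvg m Y k ω ∂ℙ = μ0 := by
    intro k hk
    rw [hZinv k]
    rw [integral_const_mul, integral_finset_sum _ (fun j hj =>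
      (hYj2 ⟨k * m + j, hidxn k j hk (Finset.mem_range.mp hj)⟩).integrable one_le_two)]
    have : ∀ j ∈ Finset.range m, ∫ ω, Y (k * m + j) ω ∂ℙ = μ0 := fun j hj =>
      hEYj ⟨k * m + j, hidxn k j hk (Finset.mem_range.mp hj)⟩
    rw [Finset.sum_congr rfl this, Finset.sum_const, Finset.card_range, nsmul_eq_mul]
    have hm' : (m : ℝ) ≠ 0 := Nat.cast_ne_zero.mpr hm0.ne'
    field_simp
  have hVZ : ∀ k, k < K → variance (blockAvg m Y k) ℙ = V / m := by
    intro k hk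
    have hm' : (m : ℝ) ≠ 0 := Nat.cast_ne_zero.mpr hm0.ne'
    rw [hZinv k, variance_const_mul]
    have hset : (fun ω => ∑ j ∈ Finset.range m, Y (k * m + j) ω)
        = ∑ i ∈ (Finset.range m).image (fun j => k * m + j), Y i := by
      funext ω
      rw [Finset.sum_apply]
      rw [Finset.sum_image (by intro a _ b _ h; simp only at h; omega)]
    have hvs : variance (fun ω => ∑ j ∈ Finset.range m, Y (k * m + j) ω) ℙ = (m : ℝ) * V := by
      rw [hset]
      rw [IndepFun.variance_sum]
      · have : ∀ i ∈ (Finset.range m).image (fun j => k * m + j), variance (Y i) ℙ = V := by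
          intro i hi
          obtain ⟨j, hj, rfl⟩ := Finset.mem_image.mp hi
          exact hVj ⟨k * m + j, hidxn k j hk (Finset.mem_range.mp hj)⟩
        rw [Finset.sum_congr rfl this, Finset.sum_const,
          Finset.card_image_of_injective _ (fun a b h => by
            have h' : k * m + a = k * m + b := h
            omega), Finset.card_range,
          nsmul_eq_mul]
      · intro i hi
        obtain ⟨j, hj, rfl⟩ := Finset.mem_image.mp hi
        exact hYj2 ⟨k * m + j, hidxn k j hk (Finset.mem_range.mp hj)⟩
      · intro i hi j hj hij
        simp only [Finset.coe_image, Set.mem_image, Finset.mem_coe] at hi hj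
        obtain ⟨a, ha, rfl⟩ := hi
        obtain ⟨b, hb, rfl⟩ := hj
        have hi' : k * m + a < n := hidxn k a hk (Finset.mem_range.mp (by exact_mod_cast ha))
        have hj' : k * m + b < n := hidxn k b hk (Finset.mem_range.mp (by exact_mod_cast hb))
        have hab : a ≠ b := fun hab => hij (by rw [hab])
        exact hYindep.indepFun (i := ⟨k * m + a, hi'⟩) (j := ⟨k * m + b, hj'⟩)
          (by simp only [ne_eq, Fin.mk.injEq]; omega)
    rw [hvs]
    field_simp
  -- case split on degeneracy
  rcases eq_or_lt_of_le hεnn with hε0 | hεpos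
  · -- degenerate case: ε = 0, variance vanishes, everything is a.s. constant
    have hsq : 0 < Real.sqrt ((L : ℝ) / n) := Real.sqrt_pos.mpr (by positivity)
    have hV0 : V = 0 := by
      have h12 : 12 * D * Real.sqrt S0 = 0 := by
        rcases mul_eq_zero.mp hε0.symm with h | h
        · exact h
        · exact absurd h hsq.ne'
      have hDS : S0 * D ^ 2 = 0 := by
        rcases mul_eq_zero.mp h12 with h | h
        · have hD0 : D = 0 := by linarith [mul_eq_zero.mp h]
          rw [hD0]; ring
        · have : S0 = 0 := by
            have := Real.sqrt_eq_zero hS0nn |>.mp h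
            exact this
          rw [this]; ring
      linarith [hVle, hVnn, hDS.le]
    have hY0sq : ∫ ω, (Y0 ω - μ0) ^ 2 ∂ℙ = 0 := by
      have h1 : variance Y0 ℙ = ∫ ω, (Y0 ω - μ0) ^ 2 ∂ℙ := by
        rw [variance_eq_integral hY02.1.aemeasurable, hEY0]
      rw [← h1, ← hVdef, hV0]
    have hae : ∀ᵐ ω ∂ℙ, Y0 ω = μ0 := by
      have hint2 : Integrable (fun ω => (Y0 ω - μ0) ^ 2) ℙ := by
        have := (hY02.sub (memLp_const μ0)).integrable_sq
        simpa [Pi.sub_apply] using this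
      have h0 := (integral_eq_zero_iff_of_nonneg
        (fun ω => sq_nonneg (Y0 ω - μ0)) hint2).mp hY0sq
      filter_upwards [h0] with ω hω
      have : (Y0 ω - μ0) ^ 2 = 0 := hω
      have := pow_eq_zero_iff (n := 2) (by norm_num) |>.mp this
      linarith
  
    have haej : ∀ j : Fin n, ∀ᵐ ω ∂ℙ, Y (j : ℕ) ω = μ0 := by
      intro j
      have hs : MeasurableSet {x : ℝ | ¬ x = μ0} :=
        (measurableSet_singleton μ0).compl
      rw [ae_iff]
      have hpre : {ω | ¬ Y (j : ℕ) ω = μ0} = Y (j : ℕ) ⁻¹' {x | ¬ x = μ0} := rfl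
      rw [hpre, ← Measure.map_apply (hYmeas _) hs, (hYid j).map_eq,
        Measure.map_apply hY0meas hs]
      have := ae_iff.mp hae
      exact this
    have hallae : ∀ᵐ ω ∂ℙ, ∀ j : Fin n, Y (j : ℕ) ω = μ0 := ae_all_iff.mpr haej
    have htarget : ∀ᵐ ω ∂ℙ, |xt ω - μ0| ≤ ε := by
      filter_upwards [hallae] with ω hω
      have hZconst : ∀ k, k < K → blockAvg m Y k ω = μ0 := by
        intro k hk
        rw [blockAvg]
        have : ∀ j ∈ Finset.range m, Y (k * m + j) ω = μ0 := fun j hj =>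
          hω ⟨k * m + j, hidxn k j hk (Finset.mem_range.mp hj)⟩
        rw [Finset.sum_congr rfl this, Finset.sum_const, Finset.card_range, nsmul_eq_mul]
        have hm' : (m : ℝ) ≠ 0 := Nat.cast_ne_zero.mpr hm0.ne'
        field_simp
      obtain ⟨h1, h2⟩ := hmom ω
      have hK2 : (0 : ℝ) < (K : ℝ) / 2 := by positivity
      have hc1 : 0 < ((Finset.range K).filter fun k => blockAvg m Y k ω ≤ xt ω).card := by
        by_contra h
        push_neg at h
        have h0 : (((Finset.range K).filter fun k => blockAvg m Y k ω ≤ xt ω).card : ℝ) = 0 := by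
          exact_mod_cast Nat.le_zero.mp h
        rw [h0] at h1
        linarith
      have hc2 : 0 < ((Finset.range K).filter fun k => xt ω ≤ blockAvg m Y k ω).card := by
        by_contra h
        push_neg at h
        have h0 : (((Finset.range K).filter fun k => xt ω ≤ blockAvg m Y k ω).card : ℝ) = 0 := by
          exact_mod_cast Nat.le_zero.mp h
        rw [h0] at h2
        linarith
      obtain ⟨k₁, hk₁⟩ := Finset.card_pos.mp hc1
      obtain ⟨k₂, hk₂⟩ := Finset.card_pos.mp hc2
      have e₁ : μ0 ≤ xt ω := by
        have hm1 := Finset.mem_filter.mp hk₁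
        have := hm1.2
        rwa [hZconst k₁ (Finset.mem_range.mp hm1.1)] at this
      have e₂ : xt ω ≤ μ0 := by
        have hm2 := Finset.mem_filter.mp hk₂
        have := hm2.2
        rwa [hZconst k₂ (Finset.mem_range.mp hm2.1)] at this
      have : xt ω = μ0 := le_antisymm e₂ e₁
      rw [this, sub_self, abs_zero]
      exact hεnn
    -- conclude: the target set has full measure
    have hcompl : ℙ {ω | ¬ |xt ω - μ0| ≤ ε} = 0 := ae_iff.mp htarget
    have hone : (1 : ENNReal) ≤ ℙ {ω | |xt ω - μ0| ≤ ε} := by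
      have hu : (Set.univ : Set Ω) = {ω | |xt ω - μ0| ≤ ε} ∪ {ω | |xt ω - μ0| ≤ ε}ᶜ :=
        (Set.union_compl_self _).symm
      have hcompl' : ℙ ({ω | |xt ω - μ0| ≤ ε}ᶜ) = 0 := by
        rw [show ({ω | |xt ω - μ0| ≤ ε}ᶜ : Set Ω) = {ω | ¬ |xt ω - μ0| ≤ ε} from rfl]
        exact hcompl
      calc (1 : ENNReal) = ℙ Set.univ := measure_univ.symm
        _ ≤ ℙ {ω | |xt ω - μ0| ≤ ε} + ℙ ({ω | |xt ω - μ0| ≤ ε}ᶜ) := by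
            rw [hu]; exact measure_union_le _ _
        _ = ℙ {ω | |xt ω - μ0| ≤ ε} := by rw [hcompl', add_zero]
    have heq : ℙ {ω | |xt ω - μ0| ≤ ε} = 1 := le_antisymm prob_le_one hone
    rw [heq]
    simp only [ENNReal.toReal_one]
    linarith
  · -- main case: ε > 0
    have hD0 : 0 < D := by
      rcases hDnn.eq_or_lt with h | h
      · exfalso
        rw [hεdef] at hεpos
        rw [← h] at hεpos
        norm_num at hεpos
      · exact h
    have hS0pos : 0 < S0 := by
      rcases hS0nn.eq_or_lt with h | h
      · exfalso
        rw [hεdef] at hεpos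
        rw [← h] at hεpos
        norm_num at hεpos
      · exact h
    have hm' : (0 : ℝ) < (m : ℝ) := Nat.cast_pos.mpr hm0
    have hn' : (0 : ℝ) < (n : ℝ) := Nat.cast_pos.mpr hn0
    have hK' : (0 : ℝ) < (K : ℝ) := Nat.cast_pos.mpr hK0
    have hL' : (1 : ℝ) ≤ (L : ℝ) := by exact_mod_cast hL1
    have hKL' : (K : ℝ) ≤ 18 * (L : ℝ) := by exact_mod_cast hKL
    have hε2 : ε ^ 2 = 144 * D ^ 2 * S0 * ((L : ℝ) / n) := by
      rw [hεdef, mul_pow, mul_pow, mul_pow, Real.sq_sqrt hS0nn,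
        Real.sq_sqrt (by positivity : (0:ℝ) ≤ (L : ℝ) / n)]
      ring
    have hme : (m : ℝ) * ε ^ 2 = 144 * D ^ 2 * S0 * ((L : ℝ) / K) := by
      have hnKm : (n : ℝ) = (K : ℝ) * (m : ℝ) := by rw [hn]; push_cast; ring
      rw [hε2, hnKm, div_mul_eq_div_div]
      calc (m : ℝ) * (144 * D ^ 2 * S0 * ((L : ℝ) / (K : ℝ) / (m : ℝ)))
          = 144 * D ^ 2 * S0 * ((L : ℝ) / (K : ℝ) / (m : ℝ) * (m : ℝ)) := by ring
        _ = 144 * D ^ 2 * S0 * ((L : ℝ) / (K : ℝ)) := by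
            rw [div_mul_cancel₀ _ (Nat.cast_ne_zero.mpr hm0.ne' : (m : ℝ) ≠ 0)]
    have hLK : (1 : ℝ) / 18 ≤ (L : ℝ) / K := by
      rw [div_le_div_iff₀ (by norm_num) hK']
      linarith
    have h8 : 8 * (D ^ 2 * S0) ≤ (m : ℝ) * ε ^ 2 := by
      rw [hme]
      calc 8 * (D ^ 2 * S0) = 144 * D ^ 2 * S0 * (1 / 18) := by ring
        _ ≤ 144 * D ^ 2 * S0 * ((L : ℝ) / K) :=
            mul_le_mul_of_nonneg_left hLK (by positivity)
    have h6V : 6 * V ≤ (m : ℝ) * ε ^ 2 := by linarith [hVle, h8]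
    -- Chebyshev bound for each block
    have hcheb : ∀ k, k < K →
        (ℙ {ω | ε ≤ |blockAvg m Y k ω - μ0|}).toReal ≤ 1 / 6 := by
      intro k hk
      have h1 := meas_ge_le_variance_div_sq (hZ2 k hk) hεpos
      rw [hVZ k hk] at h1
      have hEZ' : (∫ ω, blockAvg m Y k ω ∂ℙ) = μ0 := hEZ k hk
      rw [hEZ'] at h1
      have h2 : (ℙ {ω | ε ≤ |blockAvg m Y k ω - μ0|}).toReal ≤ V / m / ε ^ 2 :=
        ENNReal.toReal_le_of_le_ofReal (by positivity) h1
      refine h2.trans ?_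
      rw [div_div, div_le_div_iff₀ (by positivity) (by norm_num : (0:ℝ) < 6)]
      linarith
    -- the bad-block indicator machinery
    set Sset : Set ℝ := {x | ε < |x - μ0|} with hSsetdef
    have hSsetm : MeasurableSet Sset :=
      measurableSet_lt measurable_const ((measurable_id.sub measurable_const).abs)
    set ind : ℝ → ℝ := Sset.indicator (fun _ => (1 : ℝ)) with hinddef
    have hindm : Measurable ind := measurable_const.indicator hSsetm
    set X : ℕ → Ω → ℝ := fun k ω => ind (blockAvg m Y k ω) with hXdef
    have hXmeas : ∀ k, Measurable (X k) := fun k => hindm.comp (hZmeas k)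
    have hX01 : ∀ k ω, X k ω = 0 ∨ X k ω = 1 := by
      intro k ω
      by_cases h : blockAvg m Y k ω ∈ Sset
      · right
        show Sset.indicator (fun _ => (1 : ℝ)) (blockAvg m Y k ω) = 1
        rw [Set.indicator_of_mem h]
      · left
        show Sset.indicator (fun _ => (1 : ℝ)) (blockAvg m Y k ω) = 0
        rw [Set.indicator_of_notMem h]
    have hXnn : ∀ k ω, 0 ≤ X k ω := by
      intro k ω
      rcases hX01 k ω with h | h <;> rw [h] <;> norm_num
    have hXle1 : ∀ k ω, X k ω ≤ 1 := by
      intro k ω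
      rcases hX01 k ω with h | h <;> rw [h] <;> norm_num
    have hXeq : ∀ k, X k = ((blockAvg m Y k) ⁻¹' Sset).indicator (fun _ => (1 : ℝ)) := by
      intro k
      funext ω
      show Sset.indicator (fun _ => (1 : ℝ)) (blockAvg m Y k ω)
        = ((blockAvg m Y k) ⁻¹' Sset).indicator (fun _ => (1 : ℝ)) ω
      by_cases h : blockAvg m Y k ω ∈ Sset
      · rw [Set.indicator_of_mem h, Set.indicator_of_mem (Set.mem_preimage.mpr h)]
      · rw [Set.indicator_of_notMem h,
          Set.indicator_of_notMem (fun hc => h (Set.mem_preimage.mp hc))]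
    have hXint : ∀ k, Integrable (X k) ℙ := by
      intro k
      rw [hXeq k]
      exact (integrable_const (1 : ℝ)).indicator ((hZmeas k) hSsetm)
    have hEXle : ∀ k, k < K → ∫ ω, X k ω ∂ℙ ≤ 1 / 6 := by
      intro k hk
      have h1 : ∫ ω, X k ω ∂ℙ = (ℙ ((blockAvg m Y k) ⁻¹' Sset)).toReal := by
        have := hXeq k
        calc ∫ ω, X k ω ∂ℙ
            = ∫ ω, ((blockAvg m Y k) ⁻¹' Sset).indicator (fun _ => (1:ℝ)) ω ∂ℙ := by
              rw [this]
          _ = (ℙ ((blockAvg m Y k) ⁻¹' Sset)).toReal := by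
              rw [integral_indicator_const (1:ℝ) ((hZmeas k) hSsetm)]
              simp
              rfl
      rw [h1]
      have hsub : (blockAvg m Y k) ⁻¹' Sset ⊆ {ω | ε ≤ |blockAvg m Y k ω - μ0|} := by
        intro ω hω
        have h' : ε < |blockAvg m Y k ω - μ0| := hω
        exact le_of_lt h'
      calc (ℙ ((blockAvg m Y k) ⁻¹' Sset)).toReal
          ≤ (ℙ {ω | ε ≤ |blockAvg m Y k ω - μ0|}).toReal :=
            ENNReal.toReal_mono (measure_ne_top _ _) (measure_mono hsub)
        _ ≤ 1 / 6 := hcheb k hk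
    -- Chernoff: mgf bound per block
    set t : ℝ := Real.log 5 with htdef
    have ht0 : 0 ≤ t := Real.log_nonneg (by norm_num)
    have hmgfX : ∀ k, k < K → mgf (X k) ℙ t ≤ 5 / 3 := by
      intro k hk
      have hpt : ∀ ω, Real.exp (t * X k ω) = 1 + 4 * X k ω := by
        intro ω
        rcases hX01 k ω with h | h <;> rw [h]
        · simp
        · rw [mul_one, htdef, Real.exp_log (by norm_num : (0:ℝ) < 5)]
          norm_num
      have : mgf (X k) ℙ t = 1 + 4 * ∫ ω, X k ω ∂ℙ := by
        rw [mgf]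
        calc ∫ ω, Real.exp (t * X k ω) ∂ℙ = ∫ ω, (1 + 4 * X k ω) ∂ℙ :=
            integral_congr_ae (Filter.Eventually.of_forall hpt)
          _ = 1 + 4 * ∫ ω, X k ω ∂ℙ := by
              rw [integral_add (integrable_const 1) ((hXint k).const_mul 4),
                integral_const, integral_const_mul]
              simp
      rw [this]
      linarith [hEXle k hk]
    -- Chernoff: mgf of partial sums multiplies
    have hmgfsum : ∀ r, r ≤ K →
        mgf (fun ω => ∑ k ∈ Finset.range r, X k ω) ℙ t ≤ (5 / 3 : ℝ) ^ r := by
      intro r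
      induction r with
      | zero =>
        intro _
        have h0 : (fun ω : Ω => ∑ k ∈ Finset.range 0, X k ω) = fun _ => (0 : ℝ) := by
          funext ω; simp
        rw [h0, mgf_const, mul_zero, Real.exp_zero, pow_zero]
      | succ r ih =>
        intro hrK
        have hr : r < K := hrK
        have hind : IndepFun (fun ω => ∑ k ∈ Finset.range r, X k ω) (X r) ℙ :=
          blocks_indep hn Y hYmeas hYindep ind hindm hr
        have hsplit : (fun ω => ∑ k ∈ Finset.range (r + 1), X k ω)
            = (fun ω => ∑ k ∈ Finset.range r, X k ω) + X r := by
          funext ω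
          simp [Finset.sum_range_succ]
        rw [hsplit, IndepFun.mgf_add' hind
          ((Finset.measurable_sum _ (fun k _ => hXmeas k)).aestronglyMeasurable)
          ((hXmeas r).aestronglyMeasurable)]
        calc mgf (fun ω => ∑ k ∈ Finset.range r, X k ω) ℙ t * mgf (X r) ℙ t
            ≤ (5 / 3 : ℝ) ^ r * (5 / 3) :=
              mul_le_mul (ih hr.le) (hmgfX r hr) mgf_nonneg (by positivity)
          _ = (5 / 3 : ℝ) ^ (r + 1) := by rw [pow_succ]
    -- Markov / Chernoff bound on the number of bad blocks
    have hBmeas : Measurable (fun ω => ∑ k ∈ Finset.range K, X k ω) :=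
      Finset.measurable_sum _ (fun k _ => hXmeas k)
    have hBbd : ∀ ω, ∑ k ∈ Finset.range K, X k ω ≤ (K : ℝ) := by
      intro ω
      calc ∑ k ∈ Finset.range K, X k ω ≤ ∑ k ∈ Finset.range K, 1 :=
          Finset.sum_le_sum (fun k _ => hXle1 k ω)
        _ = (K : ℝ) := by simp
    have hBint : Integrable (fun ω => Real.exp (t * ∑ k ∈ Finset.range K, X k ω)) ℙ := by
      refine Integrable.mono' (integrable_const (Real.exp (t * K)))
        ((hBmeas.const_mul t).exp.aestronglyMeasurable) ?_
      refine Filter.Eventually.of_forall fun ω => ?_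
      rw [Real.norm_eq_abs, abs_of_pos (Real.exp_pos _)]
      exact Real.exp_le_exp.mpr (mul_le_mul_of_nonneg_left (hBbd ω) ht0)
    have hmarkov := measure_ge_le_exp_mul_mgf
      (X := fun ω => ∑ k ∈ Finset.range K, X k ω) (μ := ℙ) ((K : ℝ) / 2) ht0 hBint
    have hq : (ℙ {ω | (K : ℝ) / 2 ≤ ∑ k ∈ Finset.range K, X k ω}).toReal
        ≤ 2 / (d : ℝ) ^ 4 := by
      refine hmarkov.trans ?_
      have h1 : Real.exp (-t * ((K : ℝ) / 2)) *
          mgf (fun ω => ∑ k ∈ Finset.range K, X k ω) ℙ t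
          ≤ Real.exp (-t * ((K : ℝ) / 2)) * (5 / 3 : ℝ) ^ K :=
        mul_le_mul_of_nonneg_left (hmgfsum K le_rfl) (Real.exp_pos _).le
      refine h1.trans ?_
      have hpow : ((5 : ℝ) / 3) ^ K = Real.exp (K * Real.log (5 / 3)) := by
        rw [← Real.log_pow, Real.exp_log (by positivity)]
      rw [hpow, ← Real.exp_add]
      have hexpo : -t * ((K : ℝ) / 2) + (K : ℝ) * Real.log (5 / 3)
          = -((K : ℝ) / 2 * Real.log (9 / 5)) := by
        have h5 : Real.log (5 / 3 : ℝ) = Real.log 5 - Real.log 3 :=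
          Real.log_div (by norm_num) (by norm_num)
        have h9 : Real.log (9 / 5 : ℝ) = 2 * Real.log 3 - Real.log 5 := by
          rw [Real.log_div (by norm_num) (by norm_num),
            show (9 : ℝ) = 3 ^ 2 by norm_num, Real.log_pow]
          push_cast
          ring
        rw [h5, h9, htdef]
        ring
      rw [hexpo]
      have hKc : 4 * Real.log d ≤ (K : ℝ) / 2 * Real.log (9 / 5) := by
        have h1 := log_nine_fifths
        have h2 : (K : ℝ) / 2 * (4 / 9) ≤ (K : ℝ) / 2 * Real.log (9 / 5) :=
          mul_le_mul_of_nonneg_left h1 (by positivity)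
        linarith
      have h3 : Real.exp (-((K : ℝ) / 2 * Real.log (9 / 5)))
          ≤ Real.exp (-(4 * Real.log d)) := Real.exp_le_exp.mpr (by linarith)
      refine h3.trans ?_
      have h4 : Real.exp (-(4 * Real.log d)) = ((d : ℝ) ^ 4)⁻¹ := by
        rw [Real.exp_neg]
        congr 1
        rw [show (4 : ℝ) * Real.log d = Real.log ((d : ℝ) ^ (4 : ℕ)) by
          rw [Real.log_pow]; push_cast; ring]
        exact Real.exp_log (by positivity)
      rw [h4, inv_eq_one_div]
      gcongr
      norm_num
    -- the complement of the bad event is contained in the target event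
    have hsub : {ω | (K : ℝ) / 2 ≤ ∑ k ∈ Finset.range K, X k ω}ᶜ
        ⊆ {ω | |xt ω - μ0| ≤ ε} := by
      intro ω hω
      simp only [Set.mem_compl_iff, Set.mem_setOf_eq, not_le] at hω
      have hBcard : ∑ k ∈ Finset.range K, X k ω
          = (((Finset.range K).filter fun k => ε < |blockAvg m Y k ω - μ0|).card : ℝ) := by
        rw [Finset.card_filter]
        push_cast
        refine Finset.sum_congr rfl fun k _ => ?_
        by_cases h : ε < |blockAvg m Y k ω - μ0|
        · rw [if_pos h]
          show Sset.indicator (fun _ => (1 : ℝ)) (blockAvg m Y k ω) = 1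
          exact Set.indicator_of_mem (show blockAvg m Y k ω ∈ Sset from h) _
        · rw [if_neg h]
          show Sset.indicator (fun _ => (1 : ℝ)) (blockAvg m Y k ω) = 0
          exact Set.indicator_of_notMem (show blockAvg m Y k ω ∉ Sset from h) _
      have hsplitcard :
          ((Finset.range K).filter fun k => ε < |blockAvg m Y k ω - μ0|).card
          + ((Finset.range K).filter fun k => ¬ ε < |blockAvg m Y k ω - μ0|).card = K := by
        rw [Finset.card_filter_add_card_filter_not, Finset.card_range]
      have hfcongr : ((Finset.range K).filter fun k => ¬ ε < |blockAvg m Y k ω - μ0|)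
          = ((Finset.range K).filter fun k => |blockAvg m Y k ω - μ0| ≤ ε) := by
        refine Finset.filter_congr fun k _ => ?_
        rw [not_lt]
      have hgood : (K : ℝ) / 2 <
          (((Finset.range K).filter fun k => |blockAvg m Y k ω - μ0| ≤ ε).card : ℝ) := by
        rw [← hfcongr]
        have h'' : (((Finset.range K).filter fun k => ε < |blockAvg m Y k ω - μ0|).card : ℝ)
            + (((Finset.range K).filter fun k => ¬ ε < |blockAvg m Y k ω - μ0|).card : ℝ)
            = (K : ℝ) := by exact_mod_cast congrArg (Nat.cast : ℕ → ℝ) hsplitcard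
        linarith [hBcard, hω]
      exact median_dev_le hmom μ0 ε ω hgood
    -- final assembly
    have hcmeas : MeasurableSet {ω | (K : ℝ) / 2 ≤ ∑ k ∈ Finset.range K, X k ω} :=
      measurableSet_le measurable_const hBmeas
    have h1 : (ℙ ({ω | (K : ℝ) / 2 ≤ ∑ k ∈ Finset.range K, X k ω}ᶜ)).toReal
        ≤ (ℙ {ω | |xt ω - μ0| ≤ ε}).toReal :=
      ENNReal.toReal_mono (measure_ne_top _ _) (measure_mono hsub)
    have h2 : (ℙ ({ω | (K : ℝ) / 2 ≤ ∑ k ∈ Finset.range K, X k ω}ᶜ)).toReal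
        = 1 - (ℙ {ω | (K : ℝ) / 2 ≤ ∑ k ∈ Finset.range K, X k ω}).toReal := by
      rw [measure_compl hcmeas (measure_ne_top _ _), measure_univ,
        ENNReal.toReal_sub_of_le prob_le_one ENNReal.one_ne_top, ENNReal.toReal_one]
    linarith
end

section
/- Consider linear regression y = ⟨β*, x⟩ + ξ, where x is a square-integrable random vector in ℝ^d with Σₓ = E[x xᵀ], ξ is independent of x with E[ξ] = 0 and E[ξ²] = σ², and assume the bounded fourth-moment condition sup_{‖v₁‖₂ = ‖v₂‖₂ = 1} E[(v₁ᵀ x xᵀ v₂)²] ≤ C·‖Σₓ‖_op² for some constant C ≥ 0. Fix β ∈ ℝ^d, set Δ = β − β*, and let g = x(xᵀβ − y) with mean G = E[g] = Σₓ Δ. Then the covariance of g satisfies ‖E[(g − G)(g − G)ᵀ]‖_op ≤ 2(C + 1)·‖Σₓ‖_op²·‖Δ‖₂² + σ²·‖Σₓ‖_op. -/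
open MeasureTheory ProbabilityTheory
open scoped RealInnerProductSpace ENNReal

lemma aux_opNorm_le {E : Type*} [NormedAddCommGroup E] [InnerProductSpace ℝ E]
    (T : E →L[ℝ] E) (hsym : ∀ u w : E, ⟪T u, w⟫ = ⟪u, T w⟫) {M : ℝ} (hM : 0 ≤ M)
    (hq : ∀ v : E, ‖v‖ = 1 → 0 ≤ ⟪v, T v⟫ ∧ ⟪v, T v⟫ ≤ M) : ‖T‖ ≤ M := by
  have hq' : ∀ v : E, 0 ≤ ⟪v, T v⟫ ∧ ⟪v, T v⟫ ≤ M * ‖v‖ ^ 2 := by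
    intro v
    rcases eq_or_ne v 0 with rfl | hv
    · simp
    · have hnv : ‖v‖ ≠ 0 := norm_ne_zero_iff.mpr hv
      set u : E := ‖v‖⁻¹ • v with hu
      have hun : ‖u‖ = 1 := by
        rw [hu, norm_smul]; simp [abs_of_nonneg (norm_nonneg v), inv_mul_cancel₀ hnv]
      have hvu : v = ‖v‖ • u := by rw [hu, smul_smul, mul_inv_cancel₀ hnv, one_smul]
      have hQ : ⟪v, T v⟫ = ‖v‖ ^ 2 * ⟪u, T u⟫ := by
        conv_lhs => rw [hvu]
        rw [T.map_smul, real_inner_smul_left, real_inner_smul_right]; ring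
      obtain ⟨h1, h2⟩ := hq u hun
      constructor
      · rw [hQ]; positivity
      · rw [hQ]
        have : ‖v‖ ^ 2 * ⟪u, T u⟫ ≤ ‖v‖ ^ 2 * M :=
          mul_le_mul_of_nonneg_left h2 (by positivity)
        linarith
  have hCS : ∀ u w : E, ⟪T u, w⟫ ^ 2 ≤ (M * ‖u‖ ^ 2) * (M * ‖w‖ ^ 2) := by
    intro u w
    have expand : ∀ t : ℝ,
        ⟪w, T w⟫ * (t * t) + (2 * ⟪T u, w⟫) * t + ⟪u, T u⟫ = ⟪u + t • w, T (u + t • w)⟫ := by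
      intro t
      have h1 : T (u + t • w) = T u + t • T w := by rw [map_add, T.map_smul]
      rw [h1, inner_add_left, inner_add_right, inner_add_right, real_inner_smul_left,
        real_inner_smul_left, real_inner_smul_right, real_inner_smul_right]
      have h2 : ⟪w, T u⟫ = ⟪T u, w⟫ := real_inner_comm _ _
      have h3 : ⟪u, T w⟫ = ⟪T u, w⟫ := (hsym u w).symm
      rw [h2, h3]; ring
    have hd : discrim ⟪w, T w⟫ (2 * ⟪T u, w⟫) ⟪u, T u⟫ ≤ 0 := by
      apply discrim_le_zero
      intro t
      rw [expand t]
      exact (hq' _).1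
    rw [discrim] at hd
    have h1 := (hq' u).1
    have h2 := (hq' u).2
    have h3 := (hq' w).1
    have h4 := (hq' w).2
    nlinarith [mul_le_mul h4 h2 h1 (by positivity : (0:ℝ) ≤ M * ‖w‖ ^ 2)]
  refine T.opNorm_le_bound hM fun v => ?_
  have key := hCS v (T v)
  rw [real_inner_self_eq_norm_sq] at key
  by_contra hcon
  push_neg at hcon
  have hTv : 0 < ‖T v‖ := lt_of_le_of_lt (by positivity) hcon
  have h5 : M * ‖v‖ * (M * ‖v‖) < ‖T v‖ * ‖T v‖ := mul_self_lt_mul_self (by positivity) hcon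
  nlinarith [mul_pos hTv hTv, norm_nonneg v]

lemma aux_sum_integral_quad {Ω : Type*} [MeasureSpace Ω] {d : ℕ}
    (f f' : Ω → Fin d → ℝ)
    (hf : ∀ i j, Integrable (fun ω => f ω i * f' ω j) ℙ) (u v : Fin d → ℝ) :
    ∑ i, ∑ j, (u i * v j) * ∫ ω, f ω i * f' ω j ∂ℙ
      = ∫ ω, (∑ i, u i * f ω i) * (∑ j, v j * f' ω j) ∂ℙ := by
  have hpt : ∀ ω, (∑ i, u i * f ω i) * (∑ j, v j * f' ω j)
      = ∑ i, ∑ j, (u i * v j) * (f ω i * f' ω j) := by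
    intro ω
    rw [Finset.sum_mul_sum]
    exact Finset.sum_congr rfl fun i _ => Finset.sum_congr rfl fun j _ => by ring
  simp_rw [hpt]
  rw [integral_finset_sum _ fun i _ =>
    (integrable_finset_sum _ fun j _ => (hf i j).const_mul _)]
  refine Finset.sum_congr rfl fun i _ => ?_
  rw [integral_finset_sum _ fun j _ => (hf i j).const_mul _]
  exact Finset.sum_congr rfl fun j _ => (integral_const_mul _ _).symm

lemma aux_inner_toEuclideanCLM {d : ℕ} (A : Matrix (Fin d) (Fin d) ℝ)
    (u w : EuclideanSpace ℝ (Fin d)) :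
    ⟪u, (Matrix.toEuclideanCLM (𝕜 := ℝ) A) w⟫ = ∑ i, u i * A.mulVec w i := by
  rw [PiLp.inner_apply]
  refine Finset.sum_congr rfl fun i _ => ?_
  have h := congrFun (Matrix.ofLp_toEuclideanCLM (n := Fin d) (𝕜 := ℝ) A w) i
  rw [h]
  simp [mul_comm]

/-- **Covariance bound for the linear-regression gradient (Lemma on gradient covariance).**
For the model `y = ⟪β*, x⟫ + ξ` with `ξ` independent of `x`, `E ξ = 0`, `E ξ² = σ²`,
`Σₓ = E[x xᵀ]`, under the bounded fourth-moment condition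
`E[(v₁ᵀ x xᵀ v₂)²] ≤ C ‖Σₓ‖_op²` over unit vectors, the gradient `g = x (xᵀ β - y)` with
mean `G = Σₓ Δ` (`Δ = β - β*`) has covariance satisfying
`‖E[(g - G)(g - G)ᵀ]‖_op ≤ 2 (C + 1) ‖Σₓ‖_op² ‖Δ‖² + σ² ‖Σₓ‖_op`. -/
theorem gradient_covariance_opNorm_bound
    {Ω : Type*} [MeasureSpace Ω] [IsProbabilityMeasure (ℙ : Measure Ω)]
    {d : ℕ} (x : Ω → EuclideanSpace ℝ (Fin d)) (ξ : Ω → ℝ)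
    (hxmeas : Measurable x) (hξmeas : Measurable ξ)
    (hindep : IndepFun x ξ ℙ)
    (hx4 : ∀ i, MemLp (fun ω => x ω i) 4 ℙ)
    (hξ2 : MemLp ξ 2 ℙ)
    (hξmean : ∫ ω, ξ ω ∂ℙ = 0)
    (σ : ℝ) (hξvar : ∫ ω, ξ ω ^ 2 ∂ℙ = σ ^ 2)
    (Sx : Matrix (Fin d) (Fin d) ℝ)
    (hSx : ∀ i j, Sx i j = ∫ ω, x ω i * x ω j ∂ℙ)
    (C : ℝ) (hC : 0 ≤ C)
    (hmom4 : ∀ v₁ v₂ : EuclideanSpace ℝ (Fin d), ‖v₁‖ = 1 → ‖v₂‖ = 1 →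
      ∫ ω, (⟪v₁, x ω⟫ * ⟪x ω, v₂⟫) ^ 2 ∂ℙ ≤ C * matOpNorm Sx ^ 2)
    (β βstar : EuclideanSpace ℝ (Fin d))
    (y : Ω → ℝ) (hy : ∀ ω, y ω = ⟪βstar, x ω⟫ + ξ ω)
    (g : Ω → EuclideanSpace ℝ (Fin d))
    (hg : ∀ ω i, g ω i = x ω i * (⟪x ω, β⟫ - y ω))
    (Cov : Matrix (Fin d) (Fin d) ℝ)
    (hCov : ∀ i j, Cov i j =
      ∫ ω, (g ω i - Sx.mulVec (β - βstar) i) * (g ω j - Sx.mulVec (β - βstar) j) ∂ℙ) :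
    matOpNorm Cov ≤
      2 * (C + 1) * matOpNorm Sx ^ 2 * ‖β - βstar‖ ^ 2 + σ ^ 2 * matOpNorm Sx := by
  classical
  set Δ : EuclideanSpace ℝ (Fin d) := β - βstar with hΔdef
  set nS : ℝ := matOpNorm Sx with hnSdef
  have hnS : 0 ≤ nS := by rw [hnSdef]; exact norm_nonneg _
  set G : Fin d → ℝ := Sx.mulVec Δ with hGdef
  have hmv : ∀ (A : Matrix (Fin d) (Fin d) ℝ) (w : Fin d → ℝ) (i : Fin d),
      A.mulVec w i = ∑ j, A i j * w j := fun _ _ _ => rfl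
  have hsingle : ∀ (i : Fin d) (w : EuclideanSpace ℝ (Fin d)),
      w i = ⟪EuclideanSpace.single i (1:ℝ), w⟫ := by
    intro i w; rw [EuclideanSpace.inner_single_left]; simp
  have hinner_sum : ∀ (w u : EuclideanSpace ℝ (Fin d)), ⟪w, u⟫ = ∑ i, w i * u i := by
    intro w u; rw [PiLp.inner_apply]; simp [mul_comm]
  -- measurability
  have hxim : ∀ w : EuclideanSpace ℝ (Fin d), Measurable fun ω => ⟪w, x ω⟫ := fun w =>
    (Continuous.inner continuous_const continuous_id).measurable.comp hxmeas
  -- ℒp facts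
  have hw4 : ∀ w : EuclideanSpace ℝ (Fin d), MemLp (fun ω => ⟪w, x ω⟫) 4 ℙ := by
    intro w
    have h0 : MemLp (fun ω => ∑ i, w i * x ω i) 4 ℙ :=
      memLp_finset_sum _ fun i _ => (hx4 i).const_mul _
    have he : (fun ω => ⟪w, x ω⟫) = fun ω => ∑ i, w i * x ω i :=
      funext fun ω => hinner_sum w (x ω)
    rw [he]; exact h0
  have h44 : (1:ℝ≥0∞)/2 = 1/4 + 1/4 := by
    have h : (1:ℝ≥0∞)/4 = (1/2)/2 := by
      rw [ENNReal.div_eq_div_iff] <;> try norm_num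
      rw [show (4:ℝ≥0∞) = 2*2 by norm_num, mul_assoc,
        ENNReal.mul_inv_cancel two_ne_zero ENNReal.ofNat_ne_top, mul_one]
    rw [h, ENNReal.add_halves]
  have h11 : (1:ℝ≥0∞)/1 = 1/2 + 1/2 := by
    rw [ENNReal.add_halves, div_one]
  have hmul2 : ∀ w w' : EuclideanSpace ℝ (Fin d),
      MemLp (fun ω => ⟪w, x ω⟫ * ⟪w', x ω⟫) 2 ℙ := by
    intro w w'
    have := (haveI : ENNReal.HolderTriple 4 4 2 := ⟨by simp only [← one_div]; exact h44.symm⟩; (hw4 w').smul (r := 2) (hw4 w))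
    exact this
  have hL2mul : ∀ {f1 f2 : Ω → ℝ}, MemLp f1 2 ℙ → MemLp f2 2 ℙ →
      Integrable (fun ω => f1 ω * f2 ω) ℙ := by
    intro f1 f2 h1 h2
    have h3 : MemLp (f1 • f2) 1 ℙ := (haveI : ENNReal.HolderTriple 2 2 1 := ⟨by simp only [← one_div]; exact h11.symm⟩; h2.smul (r := 1) h1)
    exact h3.integrable le_rfl
  have hw2 : ∀ w : EuclideanSpace ℝ (Fin d), MemLp (fun ω => ⟪w, x ω⟫) 2 ℙ :=
    fun w => (hw4 w).mono_exponent (by norm_num)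
  have hξint : Integrable ξ ℙ := hξ2.integrable one_le_two
  have hξsq : Integrable (fun ω => ξ ω ^ 2) ℙ := by
    have := (memLp_two_iff_integrable_sq hξ2.aestronglyMeasurable).1 hξ2
    exact this
  have hBw : ∀ w : EuclideanSpace ℝ (Fin d), MemLp (fun ω => ⟪w, x ω⟫ * ξ ω) 2 ℙ := by
    intro w
    have hmeas : AEStronglyMeasurable (fun ω => ⟪w, x ω⟫ * ξ ω) ℙ :=
      ((hxim w).mul hξmeas).aestronglyMeasurable
    rw [memLp_two_iff_integrable_sq hmeas]
    have hindsq : IndepFun (fun ω => ⟪w, x ω⟫ ^ 2) (fun ω => ξ ω ^ 2) ℙ :=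
      hindep.comp ((Continuous.inner continuous_const continuous_id).pow 2).measurable
        (measurable_id.pow_const 2)
    have hxsqint : Integrable (fun ω => ⟪w, x ω⟫ ^ 2) ℙ := by
      have := hL2mul (hw2 w) (hw2 w)
      have he : (fun ω => ⟪w, x ω⟫ * ⟪w, x ω⟫) = fun ω => ⟪w, x ω⟫ ^ 2 :=
        funext fun ω => (sq _).symm
      rwa [he] at this
    have hprod := hindsq.integrable_mul hxsqint hξsq
    have he2 : ((fun ω => ⟪w, x ω⟫ ^ 2) * fun ω => ξ ω ^ 2)
        = (fun ω => ⟪w, x ω⟫ * ξ ω) ^ 2 := by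
      funext ω; simp [mul_pow]
    rwa [he2] at hprod
  -- residual identity
  have hresid : ∀ ω, ⟪x ω, β⟫ - y ω = ⟪Δ, x ω⟫ - ξ ω := by
    intro ω
    rw [hy ω, hΔdef, inner_sub_left, real_inner_comm (x ω) β]
    ring
  have hgt2 : ∀ i, MemLp (fun ω => g ω i - G i) 2 ℙ := by
    intro i
    have h0 := ((hmul2 (EuclideanSpace.single i 1) Δ).sub
      (hBw (EuclideanSpace.single i 1))).sub (memLp_const (G i))
    have he : (fun ω => g ω i - G i)
        = ((fun ω => ⟪EuclideanSpace.single i (1:ℝ), x ω⟫ * ⟪Δ, x ω⟫)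
            - fun ω => ⟪EuclideanSpace.single i (1:ℝ), x ω⟫ * ξ ω) - fun _ => G i := by
      funext ω
      simp only [Pi.sub_apply]
      rw [hg ω i, hresid ω, ← hsingle i (x ω)]
      ring
    rw [he]; exact h0
  have hgtint : ∀ i j, Integrable (fun ω => (g ω i - G i) * (g ω j - G j)) ℙ :=
    fun i j => hL2mul (hgt2 i) (hgt2 j)
  have hxint2 : ∀ i j, Integrable (fun ω => x ω i * x ω j) ℙ := fun i j =>
    hL2mul ((hx4 i).mono_exponent (by norm_num))
      ((hx4 j).mono_exponent (by norm_num))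
  -- the key quadratic-form bound
  have hkey : ∀ v : EuclideanSpace ℝ (Fin d), ‖v‖ = 1 →
      0 ≤ ⟪v, (Matrix.toEuclideanCLM (𝕜 := ℝ) Cov) v⟫ ∧
      ⟪v, (Matrix.toEuclideanCLM (𝕜 := ℝ) Cov) v⟫ ≤ C * nS ^ 2 * ‖Δ‖ ^ 2 + σ ^ 2 * nS := by
    intro v hv
    set m : ℝ := ∑ k, v k * G k with hmdef
    -- quadratic form as an integral
    have hS1 : ∀ ω, ∑ i, v i * (g ω i - G i)
        = ⟪v, x ω⟫ * ⟪Δ, x ω⟫ - ⟪v, x ω⟫ * ξ ω - m := by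
      intro ω
      have e1 : ∀ i, v i * (g ω i - G i)
          = v i * x ω i * (⟪Δ, x ω⟫ - ξ ω) - v i * G i := by
        intro i; rw [hg ω i, hresid ω]; ring
      rw [Finset.sum_congr rfl fun i _ => e1 i, Finset.sum_sub_distrib, ← Finset.sum_mul,
        ← hinner_sum v (x ω), hmdef]
      ring
    have hQexpr : ⟪v, (Matrix.toEuclideanCLM (𝕜 := ℝ) Cov) v⟫
        = ∫ ω, (⟪v, x ω⟫ * ⟪Δ, x ω⟫ - ⟪v, x ω⟫ * ξ ω - m) ^ 2 ∂ℙ := by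
      rw [aux_inner_toEuclideanCLM]
      have e1 : ∑ i, v i * Cov.mulVec v i
          = ∑ i, ∑ j, (v i * v j) * ∫ ω, (g ω i - G i) * (g ω j - G j) ∂ℙ := by
        refine Finset.sum_congr rfl fun i _ => ?_
        rw [hmv Cov v i, Finset.mul_sum]
        exact Finset.sum_congr rfl fun j _ => by rw [hCov i j, ← WithLp.ofLp_sub]; ring
      rw [e1, aux_sum_integral_quad _ _ hgtint v v]
      refine integral_congr_ae (Filter.Eventually.of_forall fun ω => ?_)
      dsimp only
      rw [hS1 ω]; ring
    have hQnonneg : 0 ≤ ⟪v, (Matrix.toEuclideanCLM (𝕜 := ℝ) Cov) v⟫ := by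
      rw [hQexpr]
      exact integral_nonneg fun ω => sq_nonneg _
    refine ⟨hQnonneg, ?_⟩
    -- integrability of the pieces
    have hA : MemLp (fun ω => ⟪v, x ω⟫ * ⟪Δ, x ω⟫ - m) 2 ℙ := by
      have h0 := (hmul2 v Δ).sub (memLp_const m)
      have he : ((fun ω => ⟪v, x ω⟫ * ⟪Δ, x ω⟫) - fun _ => m)
          = fun ω => ⟪v, x ω⟫ * ⟪Δ, x ω⟫ - m := rfl
      rwa [he] at h0
    have hB := hBw v
    have Iaa : Integrable (fun ω => (⟪v, x ω⟫ * ⟪Δ, x ω⟫ - m) ^ 2) ℙ := by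
      have := hL2mul hA hA
      have he : (fun ω => (⟪v, x ω⟫ * ⟪Δ, x ω⟫ - m) * (⟪v, x ω⟫ * ⟪Δ, x ω⟫ - m))
          = fun ω => (⟪v, x ω⟫ * ⟪Δ, x ω⟫ - m) ^ 2 := funext fun ω => (sq _).symm
      rwa [he] at this
    have Iab : Integrable (fun ω => (⟪v, x ω⟫ * ⟪Δ, x ω⟫ - m) * (⟪v, x ω⟫ * ξ ω)) ℙ :=
      hL2mul hA hB
    have Ibb : Integrable (fun ω => (⟪v, x ω⟫ * ξ ω) ^ 2) ℙ := by
      have := hL2mul hB hB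
      have he : (fun ω => (⟪v, x ω⟫ * ξ ω) * (⟪v, x ω⟫ * ξ ω))
          = fun ω => (⟪v, x ω⟫ * ξ ω) ^ 2 := funext fun ω => (sq _).symm
      rwa [he] at this
    -- split the square
    have hsplit : ∫ ω, (⟪v, x ω⟫ * ⟪Δ, x ω⟫ - ⟪v, x ω⟫ * ξ ω - m) ^ 2 ∂ℙ
        = ∫ ω, (⟪v, x ω⟫ * ⟪Δ, x ω⟫ - m) ^ 2 ∂ℙ
          - 2 * ∫ ω, (⟪v, x ω⟫ * ⟪Δ, x ω⟫ - m) * (⟪v, x ω⟫ * ξ ω) ∂ℙ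
          + ∫ ω, (⟪v, x ω⟫ * ξ ω) ^ 2 ∂ℙ := by
      have hpt : ∀ ω, (⟪v, x ω⟫ * ⟪Δ, x ω⟫ - ⟪v, x ω⟫ * ξ ω - m) ^ 2
          = (⟪v, x ω⟫ * ⟪Δ, x ω⟫ - m) ^ 2
            - 2 * ((⟪v, x ω⟫ * ⟪Δ, x ω⟫ - m) * (⟪v, x ω⟫ * ξ ω))
            + (⟪v, x ω⟫ * ξ ω) ^ 2 := fun ω => by ring
      simp_rw [hpt]
      have Isub : Integrable (fun ω => (⟪v, x ω⟫ * ⟪Δ, x ω⟫ - m) ^ 2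
          - 2 * ((⟪v, x ω⟫ * ⟪Δ, x ω⟫ - m) * (⟪v, x ω⟫ * ξ ω))) ℙ :=
        Iaa.sub (Iab.const_mul 2)
      rw [integral_add Isub Ibb,
        integral_sub Iaa (Iab.const_mul 2), integral_const_mul]
    -- the cross term vanishes
    have hABzero : ∫ ω, (⟪v, x ω⟫ * ⟪Δ, x ω⟫ - m) * (⟪v, x ω⟫ * ξ ω) ∂ℙ = 0 := by
      have hFc : Continuous (fun u : EuclideanSpace ℝ (Fin d) =>
          (⟪v, u⟫ * ⟪Δ, u⟫ - m) * ⟪v, u⟫) :=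
        (((continuous_const.inner continuous_id).mul
          (continuous_const.inner continuous_id)).sub continuous_const).mul
          (continuous_const.inner continuous_id)
      have hind : IndepFun (fun ω => (⟪v, x ω⟫ * ⟪Δ, x ω⟫ - m) * ⟪v, x ω⟫) ξ ℙ :=
        hindep.comp hFc.measurable measurable_id
      have hmeasF : AEStronglyMeasurable (fun ω => (⟪v, x ω⟫ * ⟪Δ, x ω⟫ - m) * ⟪v, x ω⟫) ℙ :=
        (hFc.measurable.comp hxmeas).aestronglyMeasurable
      have h0 := hind.integral_mul_eq_mul_integral hmeasF hξmeas.aestronglyMeasurable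
      have he : ((fun ω => (⟪v, x ω⟫ * ⟪Δ, x ω⟫ - m) * ⟪v, x ω⟫) * ξ)
          = fun ω => (⟪v, x ω⟫ * ⟪Δ, x ω⟫ - m) * (⟪v, x ω⟫ * ξ ω) := by
        funext ω; simp [Pi.mul_apply]; ring
      rw [he] at h0
      rw [h0, hξmean, mul_zero]
    -- the noise term
    have hphi2sum : ∫ ω, ⟪v, x ω⟫ ^ 2 ∂ℙ = ∑ i, v i * Sx.mulVec v i := by
      have h0 := aux_sum_integral_quad (fun ω i => x ω i) (fun ω i => x ω i) hxint2 v v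
      have e2 : ∫ ω, (∑ i, v i * x ω i) * (∑ j, v j * x ω j) ∂ℙ = ∫ ω, ⟪v, x ω⟫ ^ 2 ∂ℙ := by
        refine integral_congr_ae (Filter.Eventually.of_forall fun ω => ?_)
        dsimp only
        rw [← hinner_sum v (x ω)]; ring
      rw [← e2, ← h0]
      refine (Finset.sum_congr rfl fun i _ => ?_).symm
      rw [hmv Sx v i, Finset.mul_sum]
      exact Finset.sum_congr rfl fun j _ => by rw [hSx i j]; ring
    have hBsq : ∫ ω, (⟪v, x ω⟫ * ξ ω) ^ 2 ∂ℙ = (∑ i, v i * Sx.mulVec v i) * σ ^ 2 := by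
      have hGc : Continuous fun u : EuclideanSpace ℝ (Fin d) => ⟪v, u⟫ ^ 2 :=
        (continuous_const.inner continuous_id).pow 2
      have hind : IndepFun (fun ω => ⟪v, x ω⟫ ^ 2) (fun ω => ξ ω ^ 2) ℙ :=
        hindep.comp hGc.measurable (measurable_id.pow_const 2)
      have h0 := hind.integral_mul_eq_mul_integral ((hxim v).pow_const 2).aestronglyMeasurable
        (hξmeas.pow_const 2).aestronglyMeasurable
      have he : ((fun ω => ⟪v, x ω⟫ ^ 2) * fun ω => ξ ω ^ 2)
          = fun ω => (⟪v, x ω⟫ * ξ ω) ^ 2 := by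
        funext ω; simp [Pi.mul_apply, mul_pow]
      rw [he] at h0
      rw [h0, hξvar, hphi2sum]
    -- the main term
    have hmrel : ∫ ω, ⟪v, x ω⟫ * ⟪Δ, x ω⟫ ∂ℙ = m := by
      have h0 := aux_sum_integral_quad (fun ω i => x ω i) (fun ω i => x ω i) hxint2 v Δ
      have e2 : ∫ ω, (∑ i, v i * x ω i) * (∑ j, Δ j * x ω j) ∂ℙ
          = ∫ ω, ⟪v, x ω⟫ * ⟪Δ, x ω⟫ ∂ℙ := by
        refine integral_congr_ae (Filter.Eventually.of_forall fun ω => ?_)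
        dsimp only
        rw [← hinner_sum v (x ω), ← hinner_sum Δ (x ω)]
      rw [← e2, ← h0, hmdef]
      refine Finset.sum_congr rfl fun i _ => ?_
      rw [hGdef, hmv Sx Δ i, Finset.mul_sum]
      exact Finset.sum_congr rfl fun j _ => by rw [hSx i j]; ring
    have Iphih : Integrable (fun ω => ⟪v, x ω⟫ * ⟪Δ, x ω⟫) ℙ := (hmul2 v Δ).integrable one_le_two
    have Iphih2 : Integrable (fun ω => (⟪v, x ω⟫ * ⟪Δ, x ω⟫) ^ 2) ℙ := by
      have := hL2mul (hmul2 v Δ) (hmul2 v Δ)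
      have he : (fun ω => (⟪v, x ω⟫ * ⟪Δ, x ω⟫) * (⟪v, x ω⟫ * ⟪Δ, x ω⟫))
          = fun ω => (⟪v, x ω⟫ * ⟪Δ, x ω⟫) ^ 2 := funext fun ω => (sq _).symm
      rwa [he] at this
    have hIaa_eq : ∫ ω, (⟪v, x ω⟫ * ⟪Δ, x ω⟫ - m) ^ 2 ∂ℙ
        = ∫ ω, (⟪v, x ω⟫ * ⟪Δ, x ω⟫) ^ 2 ∂ℙ - m ^ 2 := by
      have hpt : ∀ ω, (⟪v, x ω⟫ * ⟪Δ, x ω⟫ - m) ^ 2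
          = (⟪v, x ω⟫ * ⟪Δ, x ω⟫) ^ 2 - (2 * m) * (⟪v, x ω⟫ * ⟪Δ, x ω⟫) + m ^ 2 :=
        fun ω => by ring
      simp_rw [hpt]
      have Isub2 : Integrable (fun ω => (⟪v, x ω⟫ * ⟪Δ, x ω⟫) ^ 2
          - 2 * m * (⟪v, x ω⟫ * ⟪Δ, x ω⟫)) ℙ :=
        Iphih2.sub (Iphih.const_mul (2 * m))
      rw [integral_add Isub2 (integrable_const _),
        integral_sub Iphih2 (Iphih.const_mul (2 * m)), integral_const_mul, hmrel,
        integral_const]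
      simp only [measure_univ, probReal_univ, ENNReal.toReal_one, smul_eq_mul, one_mul]
      ring
    -- fourth-moment bound
    have hmom : ∫ ω, (⟪v, x ω⟫ * ⟪Δ, x ω⟫) ^ 2 ∂ℙ ≤ C * nS ^ 2 * ‖Δ‖ ^ 2 := by
      rcases eq_or_ne Δ 0 with hΔ0 | hΔ0
      · have h0 : ∀ ω, (⟪v, x ω⟫ * ⟪Δ, x ω⟫) ^ 2 = 0 := by
          intro ω; rw [hΔ0, inner_zero_left]; ring
        simp_rw [h0]
        rw [integral_zero]
        positivity
      · have hnΔ : ‖Δ‖ ≠ 0 := norm_ne_zero_iff.mpr hΔ0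
        set u : EuclideanSpace ℝ (Fin d) := ‖Δ‖⁻¹ • Δ with hu
        have hun : ‖u‖ = 1 := by
          rw [hu, norm_smul]
          simp [abs_of_nonneg (norm_nonneg Δ), inv_mul_cancel₀ hnΔ]
        have hpt : ∀ ω, (⟪v, x ω⟫ * ⟪Δ, x ω⟫) ^ 2
            = ‖Δ‖ ^ 2 * (⟪v, x ω⟫ * ⟪x ω, u⟫) ^ 2 := by
          intro ω
          have e : ⟪x ω, u⟫ = ‖Δ‖⁻¹ * ⟪Δ, x ω⟫ := by
            rw [hu, real_inner_smul_right, real_inner_comm]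
          rw [e]
          field_simp
        simp_rw [hpt]
        rw [integral_const_mul]
        have hb := hmom4 v u hv hun
        calc ‖Δ‖ ^ 2 * ∫ ω, (⟪v, x ω⟫ * ⟪x ω, u⟫) ^ 2 ∂ℙ
            ≤ ‖Δ‖ ^ 2 * (C * nS ^ 2) := mul_le_mul_of_nonneg_left hb (by positivity)
          _ = C * nS ^ 2 * ‖Δ‖ ^ 2 := by ring
    -- Rayleigh bound on Sx
    have hsv : ∑ i, v i * Sx.mulVec v i ≤ nS := by
      have e : ∑ i, v i * Sx.mulVec v i = ⟪v, (Matrix.toEuclideanCLM (𝕜 := ℝ) Sx) v⟫ :=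
        (aux_inner_toEuclideanCLM Sx v v).symm
      rw [e]
      calc ⟪v, (Matrix.toEuclideanCLM (𝕜 := ℝ) Sx) v⟫
          ≤ ‖v‖ * ‖(Matrix.toEuclideanCLM (𝕜 := ℝ) Sx) v‖ := real_inner_le_norm _ _
        _ ≤ ‖v‖ * (nS * ‖v‖) := by
            refine mul_le_mul_of_nonneg_left ?_ (norm_nonneg v)
            rw [hnSdef]
            exact (Matrix.toEuclideanCLM (𝕜 := ℝ) Sx).le_opNorm v
        _ = nS := by rw [hv]; ring
    have hsvnn : 0 ≤ ∑ i, v i * Sx.mulVec v i := by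
      rw [← hphi2sum]
      exact integral_nonneg fun ω => sq_nonneg _
    -- combine
    rw [hQexpr, hsplit, hABzero, hIaa_eq, hBsq]
    have h1 : (∑ i, v i * Sx.mulVec v i) * σ ^ 2 ≤ nS * σ ^ 2 :=
      mul_le_mul_of_nonneg_right hsv (sq_nonneg σ)
    nlinarith [sq_nonneg m, sq_nonneg σ]
  -- symmetry of Cov
  have hCovsymm : ∀ i j, Cov i j = Cov j i := by
    intro i j
    rw [hCov i j, hCov j i]
    refine integral_congr_ae (Filter.Eventually.of_forall fun ω => ?_)
    ring
  have hTsym : ∀ u w : EuclideanSpace ℝ (Fin d),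
      ⟪(Matrix.toEuclideanCLM (𝕜 := ℝ) Cov) u, w⟫
        = ⟪u, (Matrix.toEuclideanCLM (𝕜 := ℝ) Cov) w⟫ := by
    intro u w
    calc ⟪(Matrix.toEuclideanCLM (𝕜 := ℝ) Cov) u, w⟫
        = ⟪w, (Matrix.toEuclideanCLM (𝕜 := ℝ) Cov) u⟫ := real_inner_comm _ _
      _ = ∑ i, w i * Cov.mulVec u i := aux_inner_toEuclideanCLM Cov w u
      _ = ∑ i, ∑ j, w i * (Cov i j * u j) := by
          refine Finset.sum_congr rfl fun i _ => ?_
          rw [hmv Cov u i, Finset.mul_sum]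
      _ = ∑ j, ∑ i, w i * (Cov i j * u j) := Finset.sum_comm
      _ = ∑ j, u j * Cov.mulVec w j := by
          refine Finset.sum_congr rfl fun j _ => ?_
          rw [hmv Cov w j, Finset.mul_sum]
          exact Finset.sum_congr rfl fun i _ => by rw [hCovsymm i j]; ring
      _ = ⟪u, (Matrix.toEuclideanCLM (𝕜 := ℝ) Cov) w⟫ :=
          (aux_inner_toEuclideanCLM Cov u w).symm
  have hM : 0 ≤ C * nS ^ 2 * ‖Δ‖ ^ 2 + σ ^ 2 * nS := by positivity
  have hop : matOpNorm Cov ≤ C * nS ^ 2 * ‖Δ‖ ^ 2 + σ ^ 2 * nS :=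
    aux_opNorm_le (Matrix.toEuclideanCLM (𝕜 := ℝ) Cov) hTsym hM hkey
  nlinarith [mul_nonneg (mul_nonneg (by linarith : (0:ℝ) ≤ C + 2) (sq_nonneg nS)) (sq_nonneg ‖Δ‖)]
end

section
/- Let A₁,…,A_k be independent events in a probability space, each with probability at most 1/8. Then the probability that at least k/2 of the events A₁,…,A_k occur is at most e^{−k/4.5}. -/
theorem aux_choose_le_two_pow (n k : ℕ) : n.choose k ≤ 2 ^ n := by
  rcases le_or_gt k n with h | h
  · calc n.choose k ≤ ∑ m ∈ Finset.range (n + 1), n.choose m :=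
        Finset.single_le_sum (fun i _ => Nat.zero_le _)
          (Finset.mem_range.mpr (Nat.lt_succ_of_le h))
      _ = 2 ^ n := Nat.sum_range_choose n
  · rw [Nat.choose_eq_zero_of_lt h]; exact Nat.zero_le _

open MeasureTheory ProbabilityTheory Classical in

/-- **Binomial tail bound for the median-of-means argument.**
If `A 1, …, A k` are independent events each of probability at most `1/8`, then the
probability that at least `k/2` of them occur is at most `exp (-k / 4.5)`. -/
theorem binomial_tail_bound
    {Ω : Type*} [MeasureSpace Ω] [IsProbabilityMeasure (ℙ : Measure Ω)]
    (k : ℕ) (A : Fin k → Set Ω)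
    (hmeas : ∀ i, MeasurableSet (A i))
    (hindep : iIndepSet A ℙ)
    (hp : ∀ i, (ℙ (A i)).toReal ≤ 1 / 8) :
    (ℙ {ω | (k : ℝ) / 2 ≤
        ((Finset.univ.filter fun i => ω ∈ A i).card : ℝ)}).toReal ≤
      Real.exp (-(k : ℝ) / 4.5) := by
  classical
  set m : ℕ := (k + 1) / 2 with hm
  -- Step 1: inclusion in a union over subsets of size m
  have hsub : {ω | (k : ℝ) / 2 ≤
        ((Finset.univ.filter fun i => ω ∈ A i).card : ℝ)} ⊆
      ⋃ S ∈ (Finset.powersetCard m (Finset.univ : Finset (Fin k))),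
        ⋂ i ∈ S, A i := by
    intro ω hω
    simp only [Set.mem_setOf_eq] at hω
    set T := Finset.univ.filter (fun i => ω ∈ A i) with hT
    have hk2 : (k : ℝ) ≤ 2 * T.card := by linarith
    have hk2' : k ≤ 2 * T.card := by exact_mod_cast hk2
    have hmT : m ≤ T.card := by omega
    obtain ⟨S, hS, hScard⟩ := Finset.exists_subset_card_eq hmT
    simp only [Set.mem_iUnion]
    exact ⟨S, Finset.mem_powersetCard.mpr ⟨Finset.subset_univ S, hScard⟩,
      Set.mem_iInter₂.mpr fun i hi => (Finset.mem_filter.mp (hS hi)).2⟩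
  -- Step 2: each intersection has measure ≤ (1/8)^m
  have hp' : ∀ i, ℙ (A i) ≤ (1 / 8 : ENNReal) := by
    intro i
    rw [← ENNReal.toReal_le_toReal (measure_ne_top _ _) (by simp)]
    simpa using hp i
  have hbound : ℙ {ω | (k : ℝ) / 2 ≤
        ((Finset.univ.filter fun i => ω ∈ A i).card : ℝ)} ≤
      (k.choose m : ENNReal) * (1 / 8 : ENNReal) ^ m := by
    calc ℙ _ ≤ ℙ (⋃ S ∈ (Finset.powersetCard m (Finset.univ : Finset (Fin k))),
          ⋂ i ∈ S, A i) := measure_mono hsub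
      _ ≤ ∑ S ∈ Finset.powersetCard m (Finset.univ : Finset (Fin k)),
          ℙ (⋂ i ∈ S, A i) := measure_biUnion_finset_le _ _
      _ ≤ ∑ S ∈ Finset.powersetCard m (Finset.univ : Finset (Fin k)),
          (1 / 8 : ENNReal) ^ m := by
          refine Finset.sum_le_sum fun S hS => ?_
          rw [hindep.meas_biInter S]
          have hScard := (Finset.mem_powersetCard.mp hS).2
          calc ∏ i ∈ S, ℙ (A i) ≤ ∏ i ∈ S, (1 / 8 : ENNReal) :=
                Finset.prod_le_prod' fun i _ => hp' i
            _ = (1 / 8 : ENNReal) ^ m := by rw [Finset.prod_const, hScard]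
      _ = (k.choose m : ENNReal) * (1 / 8 : ENNReal) ^ m := by
          rw [Finset.sum_const, Finset.card_powersetCard, Finset.card_univ,
            Fintype.card_fin, nsmul_eq_mul]
  -- Step 3: pass to real numbers
  have hR : (ℙ {ω | (k : ℝ) / 2 ≤
        ((Finset.univ.filter fun i => ω ∈ A i).card : ℝ)}).toReal ≤
      (k.choose m : ℝ) * (1 / 8 : ℝ) ^ m := by
    have := ENNReal.toReal_mono (ENNReal.mul_ne_top (ENNReal.natCast_ne_top _) (ENNReal.pow_ne_top (by norm_num))) hbound
    simpa [ENNReal.toReal_mul, ENNReal.toReal_pow] using this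
  refine hR.trans ?_
  -- Step 4: numerical estimate
  have hchoose : (k.choose m : ℝ) ≤ (2 : ℝ) ^ k := by
    exact_mod_cast aux_choose_le_two_pow k m
  have h18 : (0 : ℝ) < 1 / 8 := by norm_num
  have hmk : (k : ℝ) / 2 ≤ (m : ℝ) := by
    have : k ≤ 2 * m := by omega
    have : (k : ℝ) ≤ 2 * m := by exact_mod_cast this
    linarith
  have hpow : ((1 : ℝ) / 8) ^ m ≤ (1 / 8 : ℝ) ^ ((k : ℝ) / 2) := by
    rw [← Real.rpow_natCast (1 / 8 : ℝ) m]
    exact Real.rpow_le_rpow_of_exponent_ge h18 (by norm_num) hmk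
  have hstep : (k.choose m : ℝ) * (1 / 8 : ℝ) ^ m ≤
      (2 : ℝ) ^ k * (1 / 8 : ℝ) ^ ((k : ℝ) / 2) := by
    have h1 : (0 : ℝ) ≤ (1 / 8 : ℝ) ^ m := by positivity
    have h2 : (0 : ℝ) ≤ (2 : ℝ) ^ k := by positivity
    nlinarith [hchoose]
  refine hstep.trans ?_
  -- 2^k * (1/8)^(k/2) = exp(-(k/2) log 2) ≤ exp(-k/4.5)
  have hlog8 : Real.log (1 / 8 : ℝ) = -(3 * Real.log 2) := by
    rw [one_div, Real.log_inv]
    rw [show (8 : ℝ) = 2 ^ 3 by norm_num, Real.log_pow]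
    push_cast; ring
  have h2k : (2 : ℝ) ^ k = Real.exp ((k : ℝ) * Real.log 2) := by
    rw [← Real.rpow_natCast 2 k, Real.rpow_def_of_pos (by norm_num)]
    ring_nf
  have h8k : (1 / 8 : ℝ) ^ ((k : ℝ) / 2) =
      Real.exp (Real.log (1 / 8) * ((k : ℝ) / 2)) := by
    rw [Real.rpow_def_of_pos h18]
  rw [h2k, h8k, ← Real.exp_add, Real.exp_le_exp, hlog8]
  have hlog2 : Real.log 2 ≥ 0.6931471803 := le_of_lt Real.log_two_gt_d9
  have hk0 : (0 : ℝ) ≤ (k : ℝ) := Nat.cast_nonneg k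
  have hkl : (k : ℝ) * 0.6931471803 ≤ (k : ℝ) * Real.log 2 :=
    mul_le_mul_of_nonneg_left hlog2 hk0
  have hexp : (k : ℝ) * Real.log 2 + -(3 * Real.log 2) * ((k : ℝ) / 2) =
      -(1/2) * ((k : ℝ) * Real.log 2) := by ring
  rw [hexp, show (4.5 : ℝ) = 9 / 2 by norm_num]
  linarith
end

section
/- Let (Ω, P) be a probability space, G ∈ ℝ^d, let 𝒜 = {v₁,…,v_m} be a finite nonempty set of vectors in ℝ^d, and let r̃₁,…,r̃_m : Ω → ℝ be random variables such that for each i, P(|r̃ᵢ − ⟨G, vᵢ⟩| > E) ≤ δ, for some E ≥ 0 and δ ∈ [0,1]. Define (pointwise on Ω) ṽ⁺ = v_{i⁺} where i⁺ minimizes r̃ᵢ, and ṽ⁻ = v_{i⁻} where i⁻ maximizes r̃ᵢ; let v⁺ minimize ⟨G, v⟩ over 𝒜 and v⁻ maximize ⟨G, v⟩ over 𝒜. Then with probability at least 1 − m·δ, |⟨G, ṽ⁺ − ṽ⁻⟩ − ⟨G, v⁺ − v⁻⟩| ≤ 4E. -/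
open MeasureTheory ProbabilityTheory
open scoped RealInnerProductSpace

/-- **Abstract 'RLMO implies RASC' via union bound.**
If each random score `rt i` estimates `⟨G, v i⟩` within `E` except with probability `δ`,
and atoms are selected pointwise by minimizing/maximizing the scores while `v jp, v jm`
are the exact minimizer/maximizer of `⟨G, ·⟩`, then with probability at least `1 - N δ`,
`|⟨G, v (ip ω) - v (im ω)⟩ - ⟨G, v jp - v jm⟩| ≤ 4 E`. -/
theorem rlmo_implies_rasc_abstract
    {Ω : Type*} [MeasureSpace Ω] [IsProbabilityMeasure (ℙ : Measure Ω)]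
    {d N : ℕ}
    (G : EuclideanSpace ℝ (Fin d)) (v : Fin N → EuclideanSpace ℝ (Fin d))
    (rt : Fin N → Ω → ℝ) (E δ : ℝ) (hE : 0 ≤ E) (hδ : δ ∈ Set.Icc (0 : ℝ) 1)
    (hr : ∀ i, (ℙ {ω | E < |rt i ω - ⟪G, v i⟫|}).toReal ≤ δ)
    (ip im : Ω → Fin N)
    (hip : ∀ ω i, rt (ip ω) ω ≤ rt i ω) (him : ∀ ω i, rt i ω ≤ rt (im ω) ω)
    (jp jm : Fin N)
    (hjp : ∀ i, ⟪G, v jp⟫ ≤ ⟪G, v i⟫) (hjm : ∀ i, ⟪G, v i⟫ ≤ ⟪G, v jm⟫) :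
    1 - N * δ ≤
      (ℙ {ω | |⟪G, v (ip ω) - v (im ω)⟫ - ⟪G, v jp - v jm⟫| ≤ 4 * E}).toReal := by
  classical
  set Good : Set Ω := {ω | ∀ i, |rt i ω - ⟪G, v i⟫| ≤ E} with hGoodDef
  have hsub : Good ⊆ {ω | |⟪G, v (ip ω) - v (im ω)⟫ - ⟪G, v jp - v jm⟫| ≤ 4 * E} := by
    intro ω hω
    simp only [hGoodDef, Set.mem_setOf_eq] at hω ⊢
    rw [inner_sub_right, inner_sub_right]
    have h1 := abs_le.1 (hω (ip ω))
    have h2 := abs_le.1 (hω (im ω))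
    have h3 := abs_le.1 (hω jp)
    have h4 := abs_le.1 (hω jm)
    have h5 := hip ω jp
    have h6 := him ω jm
    have h7 := hjp (ip ω)
    have h8 := hjm (im ω)
    rw [abs_le]
    constructor <;> linarith
  have hGc : Goodᶜ ⊆ ⋃ i, {ω | E < |rt i ω - ⟪G, v i⟫|} := by
    intro ω hω
    simp only [hGoodDef, Set.mem_compl_iff, Set.mem_setOf_eq, not_forall, not_le] at hω
    obtain ⟨i, hi⟩ := hω
    exact Set.mem_iUnion.2 ⟨i, hi⟩
  have hfin : ∀ i : Fin N, ℙ {ω | E < |rt i ω - ⟪G, v i⟫|} ≠ ⊤ := fun i => measure_ne_top _ _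
  have hmono : ℙ Goodᶜ ≤ ∑' i : Fin N, ℙ {ω | E < |rt i ω - ⟪G, v i⟫|} :=
    le_trans (measure_mono hGc) (measure_iUnion_le _)
  have hGcReal : (ℙ Goodᶜ).toReal ≤ N * δ := by
    calc (ℙ Goodᶜ).toReal
        ≤ (∑' i : Fin N, ℙ {ω | E < |rt i ω - ⟪G, v i⟫|}).toReal := by
          refine ENNReal.toReal_mono ?_ hmono
          rw [tsum_fintype]
          exact ENNReal.sum_ne_top.2 fun i _ => hfin i
      _ = ∑ i : Fin N, (ℙ {ω | E < |rt i ω - ⟪G, v i⟫|}).toReal := by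
          rw [tsum_fintype, ENNReal.toReal_sum (fun i _ => hfin i)]
      _ ≤ ∑ _i : Fin N, δ := Finset.sum_le_sum fun i _ => hr i
      _ = N * δ := by simp [mul_comm]
  have h1 : (1 : ℝ) ≤ (ℙ Good).toReal + (ℙ Goodᶜ).toReal := by
    have h := measure_union_le (μ := (ℙ : Measure Ω)) Good Goodᶜ
    rw [Set.union_compl_self, measure_univ] at h
    calc (1 : ℝ) = (1 : ENNReal).toReal := by simp
      _ ≤ (ℙ Good + ℙ Goodᶜ).toReal := by
          refine ENNReal.toReal_mono ?_ h
          exact ENNReal.add_ne_top.2 ⟨measure_ne_top _ _, measure_ne_top _ _⟩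
      _ = (ℙ Good).toReal + (ℙ Goodᶜ).toReal :=
          ENNReal.toReal_add (measure_ne_top _ _) (measure_ne_top _ _)
  have h2 : (ℙ Good).toReal ≤
      (ℙ {ω | |⟪G, v (ip ω) - v (im ω)⟫ - ⟪G, v jp - v jm⟫| ≤ 4 * E}).toReal :=
    ENNReal.toReal_mono (measure_ne_top _ _) (measure_mono hsub)
  linarith
end
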